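/- arXiv:2304.11021 — 6 statements merged into one kernel-verified Lean document; each statement's English description precedes it below -/
import Mathlib

section
/- There is no doubly Eulerian graph of odd order n ≥ 3 containing a vertex of degree n − 1. -/
open SimpleGraph

/-- Two closed walks from the same vertex are *avoiding* if at every intermediate
step their current vertices are distinct and non-adjacent. -/
def Avoiding {V : Type*} (G : SimpleGraph V) {u : V} (p q : G.Walk u u) : Prop :=
  ∀ i : ℕ, 0 < i → i < p.length →
    p.getVert i ≠ q.getVert i ∧ ¬ G.Adj (p.getVert i) (q.getVert i)

/-- A graph is *doubly Eulerian* if from every vertex there exist two avoiding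
Eulerian circuits. -/
def DoublyEulerian {V : Type*} [DecidableEq V] (G : SimpleGraph V) : Prop :=
  ∀ u : V, ∃ p q : G.Walk u u, p.IsEulerian ∧ q.IsEulerian ∧ Avoiding G p q

/-! A universal vertex `v` is adjacent to every other vertex, so neither of two avoiding
circuits from `v` can revisit `v` before the end. Hence only the first and the last edge of an
Eulerian circuit meet `v`, and `n - 1 = deg v ≤ 2` forces `n = 3`. The second vertex `x` of the
first circuit then has even positive degree below 3, so `x` is universal too and is adjacent to
the second vertex of the other circuit, contradicting avoidance. -/

open Finset

namespace SimpleGraph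

variable {V : Type*} {G : SimpleGraph V}

namespace Walk

theorem IsEulerian.length_eq_card_edgeFinset [DecidableEq V] [Fintype G.edgeSet] {u w : V}
    {p : G.Walk u w} (hp : p.IsEulerian) : p.length = #G.edgeFinset := by
  rw [← p.length_edges, ← hp.edgesFinset_eq]
  rfl

theorem eq_snd_or_eq_penultimate_of_mem_edges {u w v x : V} {p : G.Walk u w}
    (hv : ∀ i, 0 < i → i < p.length → p.getVert i ≠ v) (he : s(v, x) ∈ p.edges) :
    x = p.snd ∨ x = p.penultimate := by
  obtain ⟨i, hi, hei⟩ := List.mem_iff_getElem.mp he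
  rw [getElem_edges, Sym2.eq_iff] at hei
  rw [length_edges] at hi
  rcases hei with ⟨hiv, hix⟩ | ⟨hix, hiv⟩
  · obtain rfl : i = 0 := by by_contra h; exact hv i (by omega) hi hiv
    exact .inl hix.symm
  · have hlast : i + 1 = p.length := by
      by_contra h; exact hv (i + 1) (by omega) (by omega) hiv
    refine .inr ?_
    rw [← hix, penultimate, ← hlast, Nat.add_sub_cancel]

theorem IsEulerian.degree_le_two [DecidableEq V] [Fintype V] [DecidableRel G.Adj] {u w v : V}
    {p : G.Walk u w} (hp : p.IsEulerian)
    (hv : ∀ i, 0 < i → i < p.length → p.getVert i ≠ v) : G.degree v ≤ 2 := by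
  have hsub : G.neighborFinset v ⊆ {p.snd, p.penultimate} := fun x hx ↦ by
    have hmem : s(v, x) ∈ p.edges := hp.mem_edges_iff.mpr ((G.mem_neighborFinset v x).mp hx)
    simpa using eq_snd_or_eq_penultimate_of_mem_edges hv hmem
  calc G.degree v = #(G.neighborFinset v) := (G.card_neighborFinset_eq_degree v).symm
    _ ≤ #{p.snd, p.penultimate} := card_le_card hsub
    _ ≤ 2 := card_le_two

end Walk

theorem isUniversal_of_even_degree_of_card_eq_three [Fintype V] [DecidableRel G.Adj] {x y : V}
    (hcard : Fintype.card V = 3) (hxy : G.Adj x y) (heven : Even (G.degree x)) :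
    G.IsUniversal x := by
  have hpos : 0 < G.degree x := G.degree_pos_iff_exists_adj x |>.mpr ⟨y, hxy⟩
  have hlt := G.degree_lt_card_verts x
  rw [← degree_eq_card_sub_one]
  obtain ⟨k, hk⟩ := heven
  omega

end SimpleGraph

theorem Avoiding.getVert_ne_of_isUniversal {V : Type*} {G : SimpleGraph V} {u v : V}
    {p q : G.Walk u u} (hpq : Avoiding G p q) (hv : G.IsUniversal v) :
    ∀ i, 0 < i → i < p.length → p.getVert i ≠ v := by
  intro i hi hil hpv
  obtain ⟨hne, hnadj⟩ := hpq i hi hil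
  rw [hpv] at hne hnadj
  exact hnadj (hv hne)


theorem not_doublyEulerian_of_odd_order_max_degree_general
    {V : Type*} [Fintype V] [DecidableEq V] (G : SimpleGraph V) [DecidableRel G.Adj]
    (n : ℕ) (hcard : Fintype.card V = n) (hn : 3 ≤ n)
    (heven : ∀ v : V, Even (G.degree v))
    (v : V) (hdeg : G.degree v = n - 1) :
    ¬ DoublyEulerian G := by
  intro hDE
  obtain ⟨p, q, hp, -, hpq⟩ := hDE v
  have hv : G.IsUniversal v := (degree_eq_card_sub_one G v).mp (hcard ▸ hdeg)
  have hp_interior := hpq.getVert_ne_of_isUniversal hv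
  have hn3 : n = 3 := by have := hp.degree_le_two hp_interior; omega
  have hlen : 1 < p.length := by
    have := G.degree_le_card_edgeFinset (v := v)
    rw [hp.length_eq_card_edgeFinset]
    omega
  have hx : G.IsUniversal p.snd :=
    isUniversal_of_even_degree_of_card_eq_three (hcard.trans hn3)
      (p.adj_snd (by rw [← Walk.length_eq_zero_iff]; omega) |>.symm) (heven _)
  obtain ⟨hne, hnadj⟩ := hpq 1 one_pos hlen
  exact hnadj (hx hne)

/-- There is no doubly Eulerian graph of odd order `n ≥ 3` containing a vertex of
degree `n - 1`. -/
theorem not_doublyEulerian_of_odd_order_max_degree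
    {V : Type*} [Fintype V] [DecidableEq V] (G : SimpleGraph V) [DecidableRel G.Adj]
    (n : ℕ) (hcard : Fintype.card V = n) (hodd : Odd n) (hn : 3 ≤ n)
    (hconn : G.Connected) (heven : ∀ v : V, Even (G.degree v))
    (v : V) (hdeg : G.degree v = n - 1) :
    ¬ DoublyEulerian G :=
  not_doublyEulerian_of_odd_order_max_degree_general G n hcard hn heven v hdeg
end

section
/- There is no doubly Eulerian graph of even order n ≥ 4 containing a vertex of degree n − 2. -/
/-!
Start both circuits at the unique non-neighbour `v` of `u`. Whenever the first circuit is at `u`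
at an interior time, the second one is at a vertex that is neither `u` nor adjacent to `u`, hence
at `v`. An Eulerian circuit from `v` visits `u` exactly `deg u / 2` times and `v` exactly
`deg v / 2 + 1` times, two of which are its endpoints; so `deg u ≤ deg v - 2`. But `v` is not
adjacent to `u`, so `deg v ≤ n - 2 = deg u`.
-/

open SimpleGraph

open Finset

namespace SimpleGraph

variable {V : Type*} {G : SimpleGraph V}

section Degree

variable [Fintype V] [DecidableEq V] [DecidableRel G.Adj]

theorem existsUnique_not_adj_of_degree_add_two {u : V}
    (hu : G.degree u + 2 = Fintype.card V) : ∃! v, u ≠ v ∧ ¬G.Adj u v := by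
  have hcompl : Gᶜ.degree u = 1 := by rw [degree_compl]; omega
  simpa only [compl_adj] using degree_eq_one_iff_existsUnique_adj.mp hcompl

theorem degree_add_two_le_card_of_not_adj {u v : V} (huv : u ≠ v) (h : ¬G.Adj u v) :
    G.degree v + 2 ≤ Fintype.card V := by
  have hpos : 0 < Gᶜ.degree v := Gᶜ.degree_pos_iff_exists_adj v |>.mpr
    ⟨u, (compl_adj G v u).mpr ⟨huv.symm, fun h' => h h'.symm⟩⟩
  have := G.degree_lt_card_verts v
  rw [degree_compl] at hpos
  omega

end Degree

namespace Walk

variable [DecidableEq V]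

theorem two_mul_count_support {x y : V} (p : G.Walk x y) (w : V) :
    2 * p.support.count w =
      p.edges.countP (w ∈ ·) + (if x = w then 1 else 0) + (if y = w then 1 else 0) := by
  induction p with
  | nil =>
    simp only [support_nil, List.count_singleton, beq_iff_eq, edges_nil, List.countP_nil]
    split_ifs <;> rfl
  | @cons a b c h p ih =>
    rw [support_cons, List.count_cons, mul_add, ih, edges_cons, List.countP_cons]
    have hab : a ≠ b := h.ne
    simp only [Sym2.mem_iff, decide_eq_true_eq, beq_iff_eq]
    grind

theorem count_support_eq_card_filter {x y : V} (p : G.Walk x y) (w : V) :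
    p.support.count w = #{i ∈ range (p.length + 1) | p.getVert i = w} := by
  induction p with
  | nil => simp [List.count_singleton, filter_singleton]; split_ifs <;> rfl
  | @cons a b c h p ih =>
    rw [support_cons, List.count_cons, ih, length_cons, card_filter, card_filter,
      sum_range_succ' _ (p.length + 1)]
    simp only [getVert_cons_succ, getVert_zero, beq_iff_eq]
    rfl

theorem count_support_add_two_le {x u : V} {p q : G.Walk x x} (hlen : p.length = q.length)
    (hpos : 0 < q.length) (hux : u ≠ x)
    (h : ∀ i, 0 < i → i < q.length → p.getVert i = u → q.getVert i = x) :
    p.support.count u + 2 ≤ q.support.count x := by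
  set m := q.length
  set P := {i ∈ range (m + 1) | p.getVert i = u}
  have h0 : 0 ∉ P := by simp [P, hux.symm]
  have hm : m ∉ P := by simp [P, ← hlen, hux.symm]
  have hsub : insert 0 (insert m P) ⊆ {i ∈ range (m + 1) | q.getVert i = x} := by
    intro i hi
    simp only [P, mem_insert, mem_filter, mem_range] at hi ⊢
    rcases hi with rfl | rfl | ⟨hi, hpi⟩
    · simp
    · simp [m]
    · refine ⟨hi, h i (Nat.pos_of_ne_zero ?_) (lt_of_le_of_ne (by omega) ?_) hpi⟩
      · rintro rfl; exact h0 (by simp [P, hpi])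
      · rintro rfl; exact hm (by simp [P, hpi])
  rw [count_support_eq_card_filter, count_support_eq_card_filter, hlen]
  have := card_le_card hsub
  rwa [card_insert_of_notMem (by simp [h0, hpos.ne]), card_insert_of_notMem hm] at this

namespace IsEulerian

variable {x y : V} {p : G.Walk x y}

theorem length_eq_card_edgeFinset_s3 [Fintype G.edgeSet] (hp : p.IsEulerian) :
    p.length = #G.edgeFinset := by
  rw [← p.length_edges, ← hp.edgesFinset_eq]
  rfl

theorem countP_mem_edges [Fintype V] [DecidableRel G.Adj] (hp : p.IsEulerian) (w : V) :
    p.edges.countP (w ∈ ·) = G.degree w := by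
  rw [← Multiset.coe_countP, Multiset.countP_eq_card_filter, ← card_incidenceFinset_eq_degree,
    incidenceFinset_eq_filter, ← hp.edgesFinset_eq]
  rfl

end IsEulerian

end Walk

end SimpleGraph

theorem not_doublyEulerian_of_even_order_degree_sub_two_general
    {V : Type*} [Fintype V] [DecidableEq V] (G : SimpleGraph V) [DecidableRel G.Adj]
    (n : ℕ) (hcard : Fintype.card V = n) (hn : 4 ≤ n)
    (u : V) (hdeg : G.degree u = n - 2) :
    ¬ DoublyEulerian G := by
  intro hG
  obtain ⟨v, ⟨huv, hnadj⟩, huniq⟩ :=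
    G.existsUnique_not_adj_of_degree_add_two (u := u) (by omega)
  obtain ⟨p, q, hp, hq, hpq⟩ := hG v
  have hlen : p.length = q.length := by
    rw [hp.length_eq_card_edgeFinset_s3, hq.length_eq_card_edgeFinset_s3]
  have hpos : 0 < q.length := by
    obtain ⟨a, ha⟩ := (G.degree_pos_iff_exists_adj u).mp (by omega)
    exact q.length_edges ▸ List.length_pos_of_mem (hq.mem_edges_iff (e := s(u, a)) |>.mpr ha)
  have hvisits := Walk.count_support_add_two_le hlen hpos huv fun i hi0 hi hpi =>
    huniq _ (by simpa [hpi] using hpq i hi0 (hlen ▸ hi))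
  have hpu := p.two_mul_count_support u
  have hqv := q.two_mul_count_support v
  rw [hp.countP_mem_edges, if_neg huv.symm] at hpu
  rw [hq.countP_mem_edges, if_pos rfl] at hqv
  have := G.degree_add_two_le_card_of_not_adj huv hnadj
  omega

/-- There is no doubly Eulerian graph of even order `n ≥ 4` containing a vertex of
degree `n - 2`. -/
theorem not_doublyEulerian_of_even_order_degree_sub_two
    {V : Type*} [Fintype V] [DecidableEq V] (G : SimpleGraph V) [DecidableRel G.Adj]
    (n : ℕ) (hcard : Fintype.card V = n) (heven_n : Even n) (hn : 4 ≤ n)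
    (hconn : G.Connected) (heven : ∀ v : V, Even (G.degree v))
    (u : V) (hdeg : G.degree u = n - 2) :
    ¬ DoublyEulerian G :=
  not_doublyEulerian_of_even_order_degree_sub_two_general G n hcard hn u hdeg
end

section
/- Let G be a bipartite Eulerian graph admitting a subgraph K isomorphic to K_{3,2} such that removing the edges of K leaves G connected. Then for any vertex v of G lying in the 3-element part of K, there exist two avoiding Eulerian circuits of G starting and ending at v. -/
open SimpleGraph

/-!
Deleting the six edges of `K_{3,2}` leaves `t`, `u`, `v` of even degree and makes `w`, `x` odd, so
the connected graph `G - K` has an Euler trail `T` from `w` to `x` (Euler's theorem, proved by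
induction on `G`, splitting off the first edge and, when it is a bridge, the component it cuts off).
The closed walks `p = v w T x u w t x v` and `q = v x t w T x u w v` are then Euler circuits of `G`.
From step 3 on, `q` runs two steps behind `p` along `w T x u w`, so the two positions differ because
`p` is a trail (steps 1 and 2 are checked directly). Two walks from `v` are always at vertices of
the same colour at the same time, hence never adjacent.
-/

open scoped symmDiff

namespace SimpleGraph

variable {V : Type*} {G H : SimpleGraph V}

/-- Degrees are counted as `ncard` of incidence sets, so that no `Fintype` instances are needed
for the subgraphs met in the induction. -/
def oddVertices (G : SimpleGraph V) : Set V := {z | Odd (G.incidenceSet z).ncard}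

theorem mem_oddVertices [DecidableEq V] {z : V} [Fintype (G.neighborSet z)] :
    z ∈ G.oddVertices ↔ Odd (G.degree z) := by
  rw [oddVertices, Set.mem_ofPred_eq, ← card_incidenceSet_eq_degree, Set.ncard_eq_toFinset_card',
    Set.toFinset_card]

theorem incidenceSet_deleteEdges (s : Set (Sym2 V)) (z : V) :
    (G.deleteEdges s).incidenceSet z = G.incidenceSet z \ s := by
  ext e
  simp only [incidenceSet, edgeSet_deleteEdges, Set.mem_sdiff, Set.mem_ofPred_eq]
  tauto

def componentGraph (G : SimpleGraph V) (w : V) : SimpleGraph V where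
  Adj a b := G.Adj a b ∧ G.Reachable a w
  symm := ⟨fun _ _ h => ⟨h.1.symm, h.1.symm.reachable.trans h.2⟩⟩
  loopless := ⟨fun a h => G.loopless.irrefl a h.1⟩

@[simp]
theorem componentGraph_adj {w a b : V} :
    (G.componentGraph w).Adj a b ↔ G.Adj a b ∧ G.Reachable a w :=
  Iff.rfl

theorem componentGraph_le (w : V) : G.componentGraph w ≤ G := fun _ _ h => h.1

theorem Reachable.componentGraph {a w : V} (h : G.Reachable a w) :
    (G.componentGraph w).Reachable a w := by
  obtain ⟨p⟩ := h
  induction p with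
  | nil => rfl
  | cons hac p ih =>
    exact (componentGraph_adj.mpr ⟨hac, ⟨Walk.cons hac p⟩⟩).reachable.trans ih

theorem oddVertices_componentGraph (w : V) :
    (G.componentGraph w).oddVertices = G.oddVertices ∩ {z | G.Reachable z w} := by
  ext z
  have hinc : (G.componentGraph w).incidenceSet z = {e ∈ G.incidenceSet z | G.Reachable z w} := by
    ext e
    induction e with
    | h a b =>
      simp only [incidenceSet, Set.mem_ofPred_eq, mem_edgeSet, componentGraph, Sym2.mem_iff]
      constructor
      · rintro ⟨⟨hab, ha⟩, rfl | rfl⟩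
        exacts [⟨⟨hab, .inl rfl⟩, ha⟩,
          ⟨⟨hab, .inr rfl⟩, hab.symm.reachable.trans ha⟩]
      · rintro ⟨⟨hab, rfl | rfl⟩, hz⟩
        exacts [⟨⟨hab, hz⟩, .inl rfl⟩, ⟨⟨hab, hab.reachable.trans hz⟩, .inr rfl⟩]
  by_cases hz : G.Reachable z w <;> simp [oddVertices, hinc, hz]

theorem Reachable.deleteEdges_or {a w : V} (y : V) (h : G.Reachable a w) :
    (G.deleteEdges {s(w, y)}).Reachable a w ∨ (G.deleteEdges {s(w, y)}).Reachable a y := by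
  obtain ⟨p⟩ := h
  induction p with
  | nil => exact .inl .rfl
  | @cons a c w hac p ih =>
    by_cases he : s(a, c) = s(w, y)
    · rcases Sym2.eq_iff.mp he with ⟨rfl, -⟩ | ⟨rfl, -⟩
      exacts [.inl .rfl, .inr .rfl]
    · have hac' : (G.deleteEdges {s(w, y)}).Adj a c := by simp [hac, he]
      exact ih.imp hac'.reachable.trans hac'.reachable.trans

theorem edgeSet_eq_empty_of_forall_not_adj {w : V}
    (hconn : ∀ ⦃a b⦄, G.Adj a b → G.Reachable a w) (hw : ∀ y, ¬ G.Adj w y) :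
    G.edgeSet = ∅ := by
  refine Set.eq_empty_of_forall_notMem fun e he => ?_
  induction e with
  | h a b =>
    obtain ⟨p⟩ := hconn he
    by_cases haw : a = w
    · exact hw b (haw ▸ he)
    · exact hw _ (p.adj_penultimate (Walk.not_nil_of_ne haw)).symm

section Euler

variable [DecidableEq V]

theorem Walk.isEulerian_of_perm {a b c d : V} {T : H.Walk a b} (hT : T.IsEulerian)
    {p : G.Walk c d} {l : List (Sym2 V)} (hl : l.Nodup)
    (hlH : ∀ e ∈ G.edgeSet, e ∈ l ↔ e ∉ H.edgeSet) (hp : p.edges.Perm (T.edges ++ l)) :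
    p.IsEulerian := by
  have hmem (e : Sym2 V) : e ∈ p.edges ↔ e ∈ T.edges ∨ e ∈ l := by
    rw [hp.mem_iff, List.mem_append]
  have hlG {e : Sym2 V} (he : e ∈ l) : e ∈ G.edgeSet :=
    p.edges_subset_edgeSet ((hmem e).2 (.inr he))
  rw [isEulerian_iff]
  refine ⟨⟨hp.nodup_iff.2 (List.nodup_append.2 ⟨hT.isTrail.edges_nodup, hl, ?_⟩)⟩, ?_⟩
  · rintro e heT _ hel rfl
    exact (hlH e (hlG hel)).1 hel (T.edges_subset_edgeSet heT)
  · intro e he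
    have := hlH e he
    rw [hmem, hT.mem_edges_iff]
    tauto

theorem isEulerian_cons_of_isEulerian_deleteEdges {w y x : V} (hwy : G.Adj w y)
    {p : (G.deleteEdges {s(w, y)}).Walk y x} (hp : p.IsEulerian) :
    (Walk.cons hwy (p.mapLe (deleteEdges_le _))).IsEulerian :=
  Walk.isEulerian_of_perm (l := [s(w, y)]) hp (List.nodup_singleton _)
    (fun e he => by simp [edgeSet_deleteEdges, he])
    (by simpa using (List.perm_append_singleton _ _).symm)

theorem isEulerian_append_cons_of_not_reachable {w y x : V} (hwy : G.Adj w y)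
    (hconn : ∀ ⦃a b⦄, G.Adj a b → G.Reachable a w)
    (hyw : ¬ (G.deleteEdges {s(w, y)}).Reachable y w)
    {p₁ : ((G.deleteEdges {s(w, y)}).componentGraph w).Walk w w} (hp₁ : p₁.IsEulerian)
    {p₂ : ((G.deleteEdges {s(w, y)}).componentGraph y).Walk y x} (hp₂ : p₂.IsEulerian) :
    ((p₁.mapLe ((componentGraph_le w).trans (deleteEdges_le _))).append
      (.cons hwy <| p₂.mapLe <| (componentGraph_le y).trans (deleteEdges_le _))).IsEulerian := by
  refine Walk.isEulerian_of_perm (l := p₁.edges ++ [s(w, y)]) hp₂ ?_ ?_ ?_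
  · refine List.nodup_append.2 ⟨hp₁.isTrail.edges_nodup, List.nodup_singleton _, ?_⟩
    rintro e he _ hwy' rfl
    rw [List.mem_singleton.1 hwy'] at he
    have := edgeSet_mono (componentGraph_le w) (p₁.edges_subset_edgeSet he)
    simp [edgeSet_deleteEdges] at this
  · intro e he
    induction e with
    | h a b =>
      have hsplit := (hconn he).deleteEdges_or y
      have hexcl : ¬ ((G.deleteEdges {s(w, y)}).Reachable a w ∧
          (G.deleteEdges {s(w, y)}).Reachable a y) := fun h => hyw (h.2.symm.trans h.1)
      simp only [List.mem_append, hp₁.mem_edges_iff, mem_edgeSet, componentGraph_adj,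
        deleteEdges_adj, List.mem_singleton, Set.mem_singleton_iff]
      have : G.Adj a b := he
      tauto
  · simp only [Walk.edges_append, Walk.edges_cons, Walk.edges_mapLe_eq_edges]
    refine List.perm_iff_count.2 fun e => ?_
    simp only [List.count_append, List.count_cons, List.count_nil]
    omega

end Euler

section Finite

variable [Finite V]

theorem oddVertices_deleteEdges_singleton {a b : V} (hab : G.Adj a b) :
    (G.deleteEdges {s(a, b)}).oddVertices = G.oddVertices ∆ ({a} ∆ {b}) := by
  ext z
  have hz : z ∈ ({a} ∆ {b} : Set V) ↔ s(a, b) ∈ G.incidenceSet z := by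
    rw [mk'_mem_incidenceSet_iff, Set.mem_symmDiff]
    grind [hab.ne]
  rw [Set.mem_symmDiff, hz]
  simp only [oddVertices, Set.mem_ofPred_eq, incidenceSet_deleteEdges]
  by_cases he : s(a, b) ∈ G.incidenceSet z
  · rw [← Set.ncard_sdiff_singleton_add_one he, Nat.odd_add_one]
    tauto
  · rw [Set.sdiff_singleton_eq_self he]
    tauto

theorem Walk.IsTrail.oddVertices_deleteEdges {a b : V} {p : G.Walk a b} (hp : p.IsTrail)
    (hpH : p.edgeSet ⊆ H.edgeSet) :
    (H.deleteEdges p.edgeSet).oddVertices = H.oddVertices ∆ ({a} ∆ {b}) := by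
  induction p generalizing H with
  | nil => simp [← Set.bot_eq_empty]
  | @cons a c b hac p ih =>
    rw [Walk.isTrail_cons] at hp
    rw [Walk.edgeSet_cons, Set.insert_subset_iff] at hpH
    have hpH' : p.edgeSet ⊆ (H.deleteEdges {s(a, c)}).edgeSet := by
      rw [edgeSet_deleteEdges]
      exact fun e he => ⟨hpH.2 he, fun h => hp.2 (by rwa [Set.mem_singleton_iff.mp h] at he)⟩
    rw [Walk.edgeSet_cons, Set.insert_eq, ← deleteEdges_deleteEdges, ih hp.1 hpH',
      oddVertices_deleteEdges_singleton (a := a) (b := c) hpH.1, symmDiff_assoc,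
      symmDiff_assoc ({a} : Set V), symmDiff_symmDiff_cancel_left]

theorem exists_ne_mem_oddVertices {z : V} (hz : z ∈ G.oddVertices) :
    ∃ z' ≠ z, z' ∈ G.oddVertices := by
  classical
  have := Fintype.ofFinite V
  simp only [mem_oddVertices] at hz ⊢
  exact G.exists_ne_odd_degree_of_exists_odd_degree z hz

theorem reachable_of_oddVertices_eq {x y : V} (h : G.oddVertices = {y} ∆ {x}) :
    G.Reachable y x := by
  by_contra hyx
  -- otherwise `y` would be the only odd vertex of its component
  have hodd : (G.componentGraph y).oddVertices = {y} := by
    rw [oddVertices_componentGraph, h]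
    ext z
    simp only [Set.mem_inter_iff, Set.mem_symmDiff, Set.mem_singleton_iff, Set.mem_ofPred_eq]
    grind [Reachable.rfl, Reachable.symm]
  obtain ⟨z, hzy, hz⟩ := exists_ne_mem_oddVertices (hodd ▸ Set.mem_singleton y)
  exact hzy (by rwa [hodd] at hz)

theorem oddVertices_componentGraph_of_reachable {w x y : V} (h : G.oddVertices = {y} ∆ {x})
    (hyw : G.Reachable y w) : (G.componentGraph w).oddVertices = {y} ∆ {x} := by
  rw [oddVertices_componentGraph, h, Set.inter_eq_left]
  intro z hz
  rcases Set.mem_symmDiff.1 hz with ⟨rfl, -⟩ | ⟨rfl, -⟩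
  exacts [hyw, (reachable_of_oddVertices_eq h).symm.trans hyw]

theorem oddVertices_componentGraph_of_not_reachable {w x y : V} (h : G.oddVertices = {y} ∆ {x})
    (hyw : ¬ G.Reachable y w) : (G.componentGraph w).oddVertices = ∅ := by
  rw [oddVertices_componentGraph, h]
  refine Set.eq_empty_of_forall_notMem fun z ⟨hz, hzw⟩ => hyw ?_
  rcases Set.mem_symmDiff.1 hz with ⟨rfl, -⟩ | ⟨rfl, -⟩
  exacts [hzw, (reachable_of_oddVertices_eq h).trans hzw]

theorem exists_isEulerian_of_oddVertices_eq [DecidableEq V] {w x : V}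
    (hconn : ∀ ⦃a b⦄, G.Adj a b → G.Reachable a w) (hodd : G.oddVertices = {w} ∆ {x}) :
    ∃ p : G.Walk w x, p.IsEulerian := by
  induction G using WellFoundedLT.induction generalizing w x with
  | ind G ih =>
  by_cases hw : ∃ y, G.Adj w y
  · obtain ⟨y, hwy⟩ := hw
    set H := G.deleteEdges {s(w, y)}
    have hHG : H < G := by
      rw [← edgeSet_ssubset_edgeSet, edgeSet_deleteEdges]
      exact Set.sdiff_singleton_ssubset.2 hwy
    have hoddH : H.oddVertices = {y} ∆ {x} := by
      rw [oddVertices_deleteEdges_singleton hwy, hodd, symmDiff_symmDiff_symmDiff_comm,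
        symmDiff_self, bot_symmDiff, symmDiff_comm]
    by_cases hyw : H.Reachable y w
    · have hconnH ⦃a b : V⦄ (hab : H.Adj a b) : H.Reachable a y :=
        ((hconn (deleteEdges_le _ hab)).deleteEdges_or y).elim (·.trans hyw.symm) id
      obtain ⟨p, hp⟩ := ih H hHG hconnH hoddH
      exact ⟨_, isEulerian_cons_of_isEulerian_deleteEdges hwy hp⟩
    · -- `s(w, y)` is a bridge: an Euler circuit of the side of `w`, the bridge, and an Euler
      -- trail of the side of `y`
      obtain ⟨p₁, hp₁⟩ := ih (H.componentGraph w) ((componentGraph_le w).trans_lt hHG)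
        (fun a b hab => hab.2.componentGraph) (x := w)
        (by rw [symmDiff_self]; exact oddVertices_componentGraph_of_not_reachable hoddH hyw)
      obtain ⟨p₂, hp₂⟩ := ih (H.componentGraph y) ((componentGraph_le y).trans_lt hHG)
        (fun a b hab => hab.2.componentGraph) (oddVertices_componentGraph_of_reachable hoddH .rfl)
      exact ⟨_, isEulerian_append_cons_of_not_reachable hwy hconn hyw hp₁ hp₂⟩
  · rw [not_exists] at hw
    have hE := edgeSet_eq_empty_of_forall_not_adj hconn hw
    obtain rfl : w = x := by
      by_contra hwx
      have hw : w ∈ G.oddVertices := hodd ▸ by simp [Set.mem_symmDiff, hwx]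
      simp [oddVertices, incidenceSet, hE] at hw
    exact ⟨.nil, fun e he => by simp [hE] at he⟩

end Finite

theorem Colorable.not_adj_getVert (hG : G.Colorable 2) {u v v' : V} (p : G.Walk u v)
    (q : G.Walk u v') {i : ℕ} (hp : i ≤ p.length) (hq : i ≤ q.length) :
    ¬ G.Adj (p.getVert i) (q.getVert i) := by
  obtain ⟨c⟩ := hG
  let c' : G.Coloring Bool := recolorOfEquiv G finTwoEquiv c
  have hcolor {v : V} (r : G.Walk u v) (hr : i ≤ r.length) :
      Even i ↔ (c' u ↔ c' (r.getVert i)) := by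
    rw [← c'.even_length_iff_congr (r.take i), Walk.take_length, min_eq_left hr]
  intro hadj
  have := (hcolor p hp).symm.trans (hcolor q hq)
  exact c'.valid hadj (Bool.eq_iff_iff.2 (by tauto))

theorem Walk.IsTrail.getVert_ne_getVert_add_two {u v : V} {p : G.Walk u v} (hp : p.IsTrail)
    {i : ℕ} (hi : i + 2 ≤ p.length) : p.getVert i ≠ p.getVert (i + 2) := by
  induction p generalizing i with
  | nil => simp at hi
  | cons h p ih =>
    rw [Walk.isTrail_cons] at hp
    cases i with
    | zero =>
      cases p with
      | nil => simp at hi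
      | cons h' p' =>
        rintro heq
        simp only [Walk.getVert_zero, Walk.getVert_cons_succ] at heq
        simp [heq, Sym2.eq_swap] at hp
    | succ i =>
      simpa using ih hp.1 (by simpa using hi)

end SimpleGraph

theorem avoiding_of_colorable_two {V : Type*} {G : SimpleGraph V} (hG : G.Colorable 2) {u : V}
    {p q : G.Walk u u} (hlen : p.length = q.length)
    (hne : ∀ i, 0 < i → i < p.length → p.getVert i ≠ q.getVert i) : Avoiding G p q :=
  fun i hi0 hi => ⟨hne i hi0 hi, hG.not_adj_getVert p q hi.le (hlen ▸ hi.le)⟩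

section K32

open SimpleGraph.Walk

variable {V : Type*} {G : SimpleGraph V} {t u v w x : V}
  (htw : G.Adj t w) (htx : G.Adj t x) (huw : G.Adj u w) (hux : G.Adj u x) (hvw : G.Adj v w)
  (hvx : G.Adj v x)

/-- The Euler trail `w t x u w v x` of the `K_{3,2}`. -/
def k32Trail : G.Walk w x :=
  .cons htw.symm (.cons htx (.cons hux.symm (.cons huw (.cons hvw.symm (.cons hvx .nil)))))

theorem isTrail_k32Trail (htu : t ≠ u) (htv : t ≠ v) (huv : u ≠ v) (hwx : w ≠ x) :
    (k32Trail htw htx huw hux hvw hvx).IsTrail := by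
  simp [k32Trail, htu, htv, huv, hwx, hwx.symm, htw.ne, htx.ne, huw.ne, hux.ne, hvx.ne]

theorem edgeSet_k32Trail :
    (k32Trail htw htx huw hux hvw hvx).edgeSet =
      {s(t, w), s(t, x), s(u, w), s(u, x), s(v, w), s(v, x)} := by
  ext e
  simp only [k32Trail, edgeSet_cons, edgeSet_nil, Sym2.eq_swap, insert_empty_eq,
    Set.mem_insert_iff, Set.mem_singleton_iff]
  tauto

theorem exists_avoiding_isEulerian_of_isEulerian_deleteEdges [DecidableEq V]
    (hbip : G.Colorable 2) (hwx : w ≠ x)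
    (hK : (k32Trail htw htx huw hux hvw hvx).IsTrail)
    {T : (G.deleteEdges (k32Trail htw htx huw hux hvw hvx).edgeSet).Walk w x}
    (hT : T.IsEulerian) :
    ∃ p q : G.Walk v v, p.IsEulerian ∧ q.IsEulerian ∧ Avoiding G p q := by
  let K := k32Trail htw htx huw hux hvw hvx
  let W : G.Walk w w := (T.mapLe (deleteEdges_le _)).append (.cons hux.symm (.cons huw .nil))
  let p : G.Walk v v := .cons hvw (W.append (.cons htw.symm (.cons htx (.cons hvx.symm .nil))))
  let q : G.Walk v v := .cons hvx (.cons htx.symm (.cons htw (W.append (.cons hvw.symm .nil))))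
  have hW : W.edges = T.edges ++ [s(x, u), s(u, w)] := by simp [W]
  have hEuler {r : G.Walk v v} (hr : r.edges.Perm (T.edges ++ K.edges)) : r.IsEulerian :=
    isEulerian_of_perm hT hK.edges_nodup (fun e he => by simp [edgeSet_deleteEdges, he]) hr
  have hp : p.IsEulerian := by
    refine hEuler (List.perm_iff_count.2 fun e => ?_)
    simp only [p, hW, K, k32Trail, edges_cons, edges_append, edges_nil,
      List.count_cons, List.count_append, List.count_nil, beq_iff_eq, Sym2.eq_swap]
    omega
  have hq : q.IsEulerian := by
    refine hEuler (List.perm_iff_count.2 fun e => ?_)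
    simp only [q, hW, K, k32Trail, edges_cons, edges_append, edges_nil,
      List.count_cons, List.count_append, List.count_nil, beq_iff_eq, Sym2.eq_swap]
    omega
  refine ⟨p, q, hp, hq, avoiding_of_colorable_two hbip (by simp [p, q, W]) ?_⟩
  have hpW {k : ℕ} (hk : k ≤ W.length) : p.getVert (k + 1) = W.getVert k := by
    simp [p, getVert_append', hk]
  have hqW {k : ℕ} (hk : k ≤ W.length) : q.getVert (k + 3) = W.getVert k := by
    simp [q, getVert_append', hk]
  have hplen : p.length = W.length + 4 := by simp [p]
  have hTpos : 0 < T.length := Nat.pos_of_ne_zero fun h => hwx (T.eq_of_length_eq_zero h)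
  intro i hi0 hi
  match i, hi0 with
  | 1, _ => simpa [p, q, W] using hwx
  | 2, _ =>
    have hT1 : (G.deleteEdges K.edgeSet).Adj w (T.getVert 1) := by
      simpa using T.adj_getVert_succ hTpos
    have hp2 : p.getVert 2 = T.getVert 1 := by
      rw [hpW (by simp [W])]
      simp [W, getVert_append', Nat.one_le_iff_ne_zero.2 hTpos.ne']
    rw [hp2, show q.getVert 2 = t by simp [q]]
    rintro h
    rw [h] at hT1
    simp [K, k32Trail] at hT1
  | j + 3, _ =>
    rw [hqW (by omega), ← hpW (by omega)]
    exact (hp.isTrail.getVert_ne_getVert_add_two (by omega)).symm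

end K32

theorem bipartite_K32_avoiding_circuits_general
    {V : Type*} [Fintype V] [DecidableEq V] (G : SimpleGraph V) [DecidableRel G.Adj]
    (hbip : G.Colorable 2)
    (heven : ∀ y : V, Even (G.degree y))
    (t u v w x : V) (htu : t ≠ u) (htv : t ≠ v) (huv : u ≠ v) (hwx : w ≠ x)
    (htw : G.Adj t w) (htx : G.Adj t x) (huw : G.Adj u w) (hux : G.Adj u x)
    (hvw : G.Adj v w) (hvx : G.Adj v x)
    (hdel : (G.deleteEdges {s(t, w), s(t, x), s(u, w), s(u, x), s(v, w), s(v, x)}).Connected) :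
    ∃ p q : G.Walk v v, p.IsEulerian ∧ q.IsEulerian ∧ Avoiding G p q := by
  have hK := isTrail_k32Trail htw htx huw hux hvw hvx htu htv huv hwx
  rw [← edgeSet_k32Trail htw htx huw hux hvw hvx] at hdel
  have hGodd : G.oddVertices = ∅ := Set.eq_empty_of_forall_notMem fun z hz =>
    Nat.not_odd_iff_even.2 (heven z) (mem_oddVertices.1 hz)
  have hodd : (G.deleteEdges (k32Trail htw htx huw hux hvw hvx).edgeSet).oddVertices =
      {w} ∆ {x} := by
    rw [hK.oddVertices_deleteEdges fun _ he => Walk.edges_subset_edgeSet _ he, hGodd,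
      ← Set.bot_eq_empty, bot_symmDiff]
  obtain ⟨T, hT⟩ :=
    exists_isEulerian_of_oddVertices_eq (fun a _ _ => hdel.preconnected a w) hodd
  exact exists_avoiding_isEulerian_of_isEulerian_deleteEdges htw htx huw hux hvw hvx hbip hwx hK
    hT

/-- If a bipartite Eulerian graph `G` contains a copy of `K_{3,2}` (on vertices
`t, u, v` and `w, x`) whose edge removal leaves `G` connected, then from the
vertex `v` of the 3-element part there exist two avoiding Eulerian circuits. -/
theorem bipartite_K32_avoiding_circuits
    {V : Type*} [Fintype V] [DecidableEq V] (G : SimpleGraph V) [DecidableRel G.Adj]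
    (hbip : G.Colorable 2) (hconn : G.Connected)
    (heven : ∀ y : V, Even (G.degree y))
    (t u v w x : V) (htu : t ≠ u) (htv : t ≠ v) (huv : u ≠ v) (hwx : w ≠ x)
    (htw : G.Adj t w) (htx : G.Adj t x) (huw : G.Adj u w) (hux : G.Adj u x)
    (hvw : G.Adj v w) (hvx : G.Adj v x)
    (hdel : (G.deleteEdges {s(t, w), s(t, x), s(u, w), s(u, x), s(v, w), s(v, x)}).Connected) :
    ∃ p q : G.Walk v v, p.IsEulerian ∧ q.IsEulerian ∧ Avoiding G p q :=
  bipartite_K32_avoiding_circuits_general G hbip heven t u v w x htu htv huv hwx htw htx huw hux hvw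
    hvx hdel
end

section
/- The complete bipartite graph K_{2r,2s} with r, s ≥ 2 is doubly Eulerian. -/
open SimpleGraph

/-!
Label the sides of `K_{2r,2s}` by `ZMod (2r)` and `ZMod s × ZMod 2`. A closed walk alternating
between the sides is given by its left vertices `x m` and right vertices `y m`; with `4rs` steps it
is Eulerian as soon as it uses every edge. The first circuit is `x m = m`, `y m = (⌊m / 2r⌋, m)`:
a concatenation of `s` circuits, the `t`-th one through the double star of all edges at `(t, 0)`
and `(t, 1)`. The second visits the same double stars `2r - 1` steps earlier, `y m` being the first
circuit's `y (m + 2r - 1)`, with left labels `x m = m + 1`; so the double star of `0`, in which it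
starts, is split around all the others. Both walks are on the same side at each time, so never
adjacent, and the shifts keep them apart. Relabelling the vertices and exchanging the two sides
moves the common start to any vertex.
-/

namespace SimpleGraph

namespace Walk

variable {V W : Type*} [DecidableEq V] [DecidableEq W] {G : SimpleGraph V} {H : SimpleGraph W}

theorem isEulerian_copy {u v u' v' : V} (p : G.Walk u v) (hu : u = u') (hv : v = v') :
    (p.copy hu hv).IsEulerian ↔ p.IsEulerian := by
  subst hu hv
  rfl

theorem isEulerian_of_length_le_encard {u v : V} {p : G.Walk u v}
    (hlen : (p.length : ℕ∞) ≤ G.edgeSet.encard) (hcov : ∀ e ∈ G.edgeSet, e ∈ p.edges) :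
    p.IsEulerian := by
  have hsub : G.edgeSet ⊆ ↑p.edges.toFinset := fun e he => by simpa using hcov e he
  have hcard : p.edges.length ≤ p.edges.toFinset.card := by
    have := hlen.trans (Set.encard_le_encard hsub)
    rw [Set.encard_coe_eq_coe_finsetCard] at this
    simpa using this
  refine IsTrail.isEulerian_of_forall_mem ?_ hcov
  rw [isTrail_def, ← Multiset.coe_nodup, ← Multiset.toFinset_card_eq_card_iff_nodup]
  exact (le_antisymm hcard (List.toFinset_card_le _)).symm

theorem IsEulerian.map_iso (e : G ≃g H) {u v : V} {p : G.Walk u v} (hp : p.IsEulerian) :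
    (p.map e.toHom).IsEulerian := by
  intro f hf
  obtain ⟨f, rfl⟩ : ∃ f', f'.map e = f := ⟨f.map e.symm, by simp [Sym2.map_map]⟩
  rw [edges_map]
  show List.count _ (List.map (Sym2.map e) _) = 1
  rw [List.count_map_of_injective _ _ (Sym2.map.injective e.injective)]
  exact hp f (e.map_mem_edgeSet_iff.1 hf)

end Walk

end SimpleGraph

theorem Avoiding.map_iso {V W : Type*} {G : SimpleGraph V} {H : SimpleGraph W} (e : G ≃g H)
    {u : V} {p q : G.Walk u u} (h : Avoiding G p q) :
    Avoiding H (p.map e.toHom) (q.map e.toHom) := by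
  intro i hi₀ hi
  rw [Walk.length_map] at hi
  simp only [Walk.getVert_map]
  exact ⟨e.injective.ne (h i hi₀ hi).1, e.map_adj_iff.not.2 (h i hi₀ hi).2⟩

theorem ZMod.natCast_add_mul_self (n m k : ℕ) : ((m + n * k : ℕ) : ZMod n) = m := by
  rw [Nat.cast_add, Nat.cast_mul, ZMod.natCast_self, zero_mul, add_zero]

theorem ZMod.natCast_ne_zero_of_lt {n k : ℕ} (hk₀ : 0 < k) (hk : k < n) : (k : ZMod n) ≠ 0 := by
  rw [Ne, ZMod.natCast_eq_zero_iff]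
  exact Nat.not_dvd_of_pos_of_lt hk₀ hk

namespace SimpleGraph

def HasAvoidingEulerianPair {V : Type*} [DecidableEq V] (G : SimpleGraph V) (u : V) : Prop :=
  ∃ p q : G.Walk u u, p.IsEulerian ∧ q.IsEulerian ∧ Avoiding G p q

theorem HasAvoidingEulerianPair.map_iso {V W : Type*} [DecidableEq V] [DecidableEq W]
    {G : SimpleGraph V} {H : SimpleGraph W} (e : G ≃g H) {u : V}
    (h : G.HasAvoidingEulerianPair u) : H.HasAvoidingEulerianPair (e u) :=
  let ⟨p, q, hp, hq, hpq⟩ := h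
  ⟨p.map e.toHom, q.map e.toHom, hp.map_iso e, hq.map_iso e, hpq.map_iso e⟩

variable {α β α' β' : Type*}

def Iso.completeBipartiteGraphCongr (e₁ : α ≃ α') (e₂ : β ≃ β') :
    completeBipartiteGraph α β ≃g completeBipartiteGraph α' β' :=
  ⟨e₁.sumCongr e₂, by rintro (a | b) (a' | b') <;> simp⟩

def Iso.completeBipartiteGraphComm : completeBipartiteGraph α β ≃g completeBipartiteGraph β α :=
  ⟨Equiv.sumComm α β, by rintro (a | b) (a' | b') <;> simp⟩

namespace completeBipartiteGraph

def alternatingWalk (x : ℕ → α) (y : ℕ → β) :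
    (n : ℕ) → (completeBipartiteGraph α β).Walk (.inl (x 0)) (.inl (x n))
  | 0 => .nil
  | n + 1 => .cons (v := .inr (y 0)) (by simp) (.cons (by simp)
      (alternatingWalk (fun m => x (m + 1)) (fun m => y (m + 1)) n))

def Traverses (x : ℕ → α) (y : ℕ → β) (a : α) (b : β) : Prop :=
  ∃ m, y m = b ∧ (x m = a ∨ x (m + 1) = a)

section alternatingWalk

variable (x : ℕ → α) (y : ℕ → β)

@[simp]
theorem length_alternatingWalk (n : ℕ) : (alternatingWalk x y n).length = 2 * n := by
  induction n generalizing x y with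
  | zero => rfl
  | succ n ih =>
    rw [alternatingWalk, Walk.length_cons, Walk.length_cons, ih]
    ring

theorem getVert_alternatingWalk_two_mul {n m : ℕ} (hm : m ≤ n) :
    (alternatingWalk x y n).getVert (2 * m) = .inl (x m) := by
  induction n generalizing x y m with
  | zero =>
    obtain rfl : m = 0 := by omega
    rfl
  | succ n ih =>
    cases m with
    | zero => rfl
    | succ m => exact ih (fun m => x (m + 1)) (fun m => y (m + 1)) (m := m) (by omega)

theorem getVert_alternatingWalk_two_mul_add_one {n m : ℕ} (hm : m < n) :
    (alternatingWalk x y n).getVert (2 * m + 1) = .inr (y m) := by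
  induction n generalizing x y m with
  | zero => omega
  | succ n ih =>
    cases m with
    | zero => rfl
    | succ m => exact ih (fun m => x (m + 1)) (fun m => y (m + 1)) (m := m) (by omega)

theorem mem_edges_alternatingWalk {n m : ℕ} (hm : m < n) :
    s(.inl (x m), .inr (y m)) ∈ (alternatingWalk x y n).edges ∧
      s(.inl (x (m + 1)), .inr (y m)) ∈ (alternatingWalk x y n).edges := by
  induction n generalizing x y m with
  | zero => omega
  | succ n ih =>
    cases m with
    | zero => simp [alternatingWalk]
    | succ m =>
      obtain ⟨h₁, h₂⟩ := ih (fun m => x (m + 1)) (fun m => y (m + 1)) (by omega : m < n)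
      exact ⟨.tail _ (.tail _ h₁), .tail _ (.tail _ h₂)⟩

theorem isEulerian_alternatingWalk [Fintype α] [Fintype β] [DecidableEq α] [DecidableEq β]
    {n : ℕ} (hn : 0 < n) (hlen : 2 * n ≤ Fintype.card α * Fintype.card β)
    (hx : Function.Periodic x n) (hy : Function.Periodic y n) (hcov : ∀ a b, Traverses x y a b) :
    (alternatingWalk x y n).IsEulerian := by
  refine Walk.isEulerian_of_length_le_encard ?_ ?_
  · rw [encard_edgeSet_completeBipartiteGraph, ENat.card_eq_coe_fintype_card,
      ENat.card_eq_coe_fintype_card, length_alternatingWalk]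
    exact_mod_cast hlen
  rw [edgeSet_completeBipartiteGraph]
  rintro _ ⟨⟨a, b⟩, rfl⟩
  obtain ⟨m, rfl, hxm⟩ := hcov a b
  have hsucc : x (m % n + 1) = x (m + 1) := by
    conv_rhs => rw [← Nat.mod_add_div' m n, add_right_comm]
    exact (hx.nat_mul _ _).symm
  have hedges := mem_edges_alternatingWalk x y (Nat.mod_lt m hn)
  rw [hx.map_mod_nat, hy.map_mod_nat, hsucc] at hedges
  rcases hxm with rfl | rfl
  exacts [hedges.1, hedges.2]

end alternatingWalk

theorem avoiding_copy_alternatingWalk {x x' : ℕ → α} {y y' : ℕ → β} {n : ℕ} {u : α ⊕ β}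
    (h₀ : .inl (x 0) = u) (hₙ : .inl (x n) = u) (h₀' : .inl (x' 0) = u) (hₙ' : .inl (x' n) = u)
    (hx : ∀ m, 0 < m → m < n → x m ≠ x' m) (hy : ∀ m < n, y m ≠ y' m) :
    Avoiding _ ((alternatingWalk x y n).copy h₀ hₙ) ((alternatingWalk x' y' n).copy h₀' hₙ') := by
  intro i hi₀ hi
  simp only [Walk.getVert_copy, Walk.length_copy, length_alternatingWalk] at hi ⊢
  obtain ⟨m, rfl | rfl⟩ := Nat.even_or_odd' i
  · rw [getVert_alternatingWalk_two_mul _ _ (by omega),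
      getVert_alternatingWalk_two_mul _ _ (by omega)]
    simpa using hx m (by omega) (by omega)
  · rw [getVert_alternatingWalk_two_mul_add_one _ _ (by omega),
      getVert_alternatingWalk_two_mul_add_one _ _ (by omega)]
    simpa using hy m (by omega)

theorem traverses_of_doubleStar {L : ℕ} [NeZero L] (hL : Even L) {x : ℕ → ZMod L}
    {y : ℕ → β × ZMod 2} {c : ℕ} (σ : Equiv.Perm (ZMod L)) {b : β} {d : ZMod 2}
    (hx : ∀ m, c ≤ m → m < c + L → x m = σ m) (hclose : x (c + L) = x c)
    (hy : ∀ m, c ≤ m → m < c + L → y m = (b, m + d)) (a : ZMod L) (e : ZMod 2) :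
    Traverses x y a (b, e) := by
  -- `a` is visited at some `j` in the window, and the edge to `(b, e)` is taken right after `j` or
  -- right before it, cyclically in the window since `L` is even
  obtain ⟨j, hjc, hjL, hxj⟩ : ∃ j, c ≤ j ∧ j < c + L ∧ x j = a :=
    ⟨c + (σ.symm a - c).val, le_self_add, Nat.add_lt_add_left (ZMod.val_lt _) _,
      by simp [hx _ le_self_add (Nat.add_lt_add_left (ZMod.val_lt _) _)]⟩
  by_cases hj : e = j + d
  · exact ⟨j, by rw [hy j hjc hjL, hj], .inl hxj⟩
  have he : e = j + d + 1 := by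
    generalize (j : ZMod 2) + d = u at hj ⊢
    revert e u
    decide
  rcases hjc.eq_or_lt with rfl | hcj
  · have hwrap : ((c + L - 1 : ℕ) : ZMod 2) = ((c + 1 : ℕ) : ZMod 2) :=
      (ZMod.natCast_eq_natCast_iff' _ _ _).2 (by obtain ⟨l, hl⟩ := hL; omega)
    refine ⟨c + L - 1, ?_, .inr ?_⟩
    · rw [hy _ (by omega) (by omega), hwrap, he]
      congr 1
      push_cast
      ring
    · rw [Nat.sub_add_cancel (by omega), hclose, hxj]
  · obtain ⟨k, rfl⟩ : ∃ k, j = k + 1 := Nat.exists_eq_add_one.2 (by omega)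
    refine ⟨k, ?_, .inr hxj⟩
    have htwo : (2 : ZMod 2) = 0 := rfl
    rw [hy k (by omega) (by omega), he]
    congr 1
    push_cast
    linear_combination -htwo

variable (r s : ℕ)

def blockRight (m : ℕ) : ZMod s × ZMod 2 := ((m / (2 * r) : ℕ), m)

def shiftedPair (m : ℕ) : ZMod s := ((m + 2 * r - 1) / (2 * r) : ℕ)

/-- For `m ∈ [2r(s - 1) + 1, 2rs]` the second circuit is back in the double star of `0`; swapping
the labels `0` and `1` there makes it return to `0`, not `1`, at `m = 2rs`. -/
def shiftPerm (t : ZMod s) : Equiv.Perm (ZMod (2 * r)) :=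
  if t = 0 then (Equiv.addRight 1).trans (Equiv.swap 0 1) else Equiv.addRight 1

def shiftedLeft (m : ℕ) : ZMod (2 * r) := shiftPerm r s (shiftedPair r s m) m

def shiftedRight (m : ℕ) : ZMod s × ZMod 2 := (shiftedPair r s m, m + 1)

variable {r s}

theorem periodic_natCast : Function.Periodic (Nat.cast : ℕ → ZMod (2 * r)) (2 * r * s) :=
  fun m => ZMod.natCast_add_mul_self _ m s

theorem periodic_blockRight : Function.Periodic (blockRight r s) (2 * r * s) := by
  intro m
  rcases Nat.eq_zero_or_pos r with rfl | hr
  · simp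
  have hdiv : (m + 2 * r * s) / (2 * r) = m / (2 * r) + s :=
    Nat.add_mul_div_left _ _ (by omega)
  rw [blockRight, blockRight, hdiv, mul_assoc, ZMod.natCast_add_mul_self, Nat.cast_add,
    ZMod.natCast_self, add_zero]

theorem periodic_shiftedPair : Function.Periodic (shiftedPair r s) (2 * r * s) := by
  intro m
  rcases Nat.eq_zero_or_pos r with rfl | hr
  · simp
  have hdiv : (m + 2 * r * s + 2 * r - 1) / (2 * r) = (m + 2 * r - 1) / (2 * r) + s := by
    rw [← Nat.add_mul_div_left _ _ (by omega : 0 < 2 * r)]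
    congr 1
    omega
  rw [shiftedPair, shiftedPair, hdiv, Nat.cast_add, ZMod.natCast_self, add_zero]

theorem periodic_shiftedLeft : Function.Periodic (shiftedLeft r s) (2 * r * s) :=
  fun m => by rw [shiftedLeft, periodic_shiftedPair, periodic_natCast, shiftedLeft]

theorem periodic_shiftedRight : Function.Periodic (shiftedRight r s) (2 * r * s) :=
  fun m => by
    rw [shiftedRight, shiftedRight, periodic_shiftedPair m, mul_assoc, ZMod.natCast_add_mul_self]

theorem shiftedLeft_zero : shiftedLeft r s 0 = 0 := by
  have hpair : shiftedPair r s 0 = 0 := by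
    rw [shiftedPair, Nat.div_eq_zero_iff.2 (by omega), Nat.cast_zero]
  simp [shiftedLeft, shiftPerm, hpair]

theorem blockRight_of_mem [NeZero s] (t : ZMod s) {m : ℕ} (h₁ : 2 * r * t.val ≤ m)
    (h₂ : m < 2 * r * t.val + 2 * r) : blockRight r s m = (t, (m : ZMod 2)) := by
  have hdiv : m / (2 * r) = t.val := Nat.div_eq_of_lt_le (by linarith) (by linarith)
  rw [blockRight, hdiv, ZMod.natCast_zmod_val]

theorem shiftedPair_of_mem [NeZero s] (t : ZMod s) {m : ℕ} (h₁ : 2 * r * (t - 1).val + 1 ≤ m)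
    (h₂ : m < 2 * r * (t - 1).val + 1 + 2 * r) : shiftedPair r s m = t := by
  have hdiv : (m + 2 * r - 1) / (2 * r) = (t - 1).val + 1 := by
    have h₃ : ((t - 1).val + 1) * (2 * r) = 2 * r * (t - 1).val + 2 * r := by ring
    exact Nat.div_eq_of_lt_le (by omega) (by rw [add_mul, h₃]; omega)
  rw [shiftedPair, hdiv, Nat.cast_add, ZMod.natCast_zmod_val, Nat.cast_one, sub_add_cancel]

theorem shiftedPair_two_mul_mul (hr : 0 < r) (j : ℕ) : shiftedPair r s (2 * r * j) = j := by
  have hdiv : (2 * r * j + 2 * r - 1) / (2 * r) = j :=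
    Nat.div_eq_of_lt_le (by rw [mul_comm]; omega) (by rw [add_mul, mul_comm]; omega)
  rw [shiftedPair, hdiv]

theorem shiftedLeft_of_natCast_eq_one (hr : 2 ≤ r) {m : ℕ} (h : (m : ZMod (2 * r)) = 1) :
    shiftedLeft r s m = 2 := by
  have hm : (m : ZMod (2 * r)) + 1 = 2 := by rw [h, one_add_one_eq_two]
  unfold shiftedLeft shiftPerm
  split_ifs
  · have h₀ : (2 : ZMod (2 * r)) ≠ 0 := by
      exact_mod_cast ZMod.natCast_ne_zero_of_lt (n := 2 * r) two_pos (by omega)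
    have h₁ : (2 : ZMod (2 * r)) ≠ 1 := fun h => ZMod.natCast_ne_zero_of_lt (n := 2 * r) one_pos
      (by omega) (by push_cast; linear_combination h)
    simp [hm, Equiv.swap_apply_of_ne_of_ne h₀ h₁]
  · simp [hm]

theorem natCast_ne_shiftedLeft (hr : 2 ≤ r) {m : ℕ} (h₀ : 0 < m) (hm : m < 2 * r * s) :
    (m : ZMod (2 * r)) ≠ shiftedLeft r s m := by
  have h₁ : (1 : ZMod (2 * r)) ≠ 0 := by
    exact_mod_cast ZMod.natCast_ne_zero_of_lt (n := 2 * r) one_pos (by omega)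
  have h₂ : (2 : ZMod (2 * r)) ≠ 0 := by
    exact_mod_cast ZMod.natCast_ne_zero_of_lt (n := 2 * r) two_pos (by omega)
  unfold shiftedLeft shiftPerm
  split_ifs with hpair
  · -- the multiples `2rj` with `0 < j < s` lie in the double stars of `j ≠ 0`
    have hm₀ : (m : ZMod (2 * r)) ≠ 0 := by
      intro h
      obtain ⟨j, rfl⟩ := (ZMod.natCast_eq_zero_iff m (2 * r)).1 h
      rw [shiftedPair_two_mul_mul (by omega), ZMod.natCast_eq_zero_iff] at hpair
      exact Nat.not_dvd_of_pos_of_lt (Nat.pos_of_mul_pos_left h₀)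
        (Nat.lt_of_mul_lt_mul_left hm) hpair
    simp only [Equiv.trans_apply, Equiv.coe_addRight, Equiv.swap_apply_def]
    split_ifs with h h'
    · exact fun h'' => h₂ (by linear_combination h - h'')
    · exact absurd (by linear_combination h') hm₀
    · exact left_ne_add.2 h₁
  · exact left_ne_add.2 h₁

variable (r s)

def blockCircuit :
    (completeBipartiteGraph (ZMod (2 * r)) (ZMod s × ZMod 2)).Walk (.inl 0) (.inl 0) :=
  (alternatingWalk Nat.cast (blockRight r s) (2 * r * s)).copy (by simp) (by simp)

def shiftedCircuit :
    (completeBipartiteGraph (ZMod (2 * r)) (ZMod s × ZMod 2)).Walk (.inl 0) (.inl 0) :=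
  (alternatingWalk (shiftedLeft r s) (shiftedRight r s) (2 * r * s)).copy
    (by rw [shiftedLeft_zero]) (by rw [periodic_shiftedLeft.eq, shiftedLeft_zero])

variable {r s} [NeZero s]

theorem two_mul_eq_card_mul_card [NeZero r] :
    2 * (2 * r * s) = Fintype.card (ZMod (2 * r)) * Fintype.card (ZMod s × ZMod 2) := by
  rw [Fintype.card_prod, ZMod.card, ZMod.card, ZMod.card]
  ring

theorem blockCircuit_isEulerian [NeZero r] : (blockCircuit r s).IsEulerian := by
  refine (Walk.isEulerian_copy _ _ _).2 (isEulerian_alternatingWalk _ _ (Nat.pos_of_neZero _)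
    two_mul_eq_card_mul_card.le periodic_natCast periodic_blockRight ?_)
  rintro a ⟨t, e⟩
  refine traverses_of_doubleStar ⟨r, two_mul r⟩ (Equiv.refl _) (c := 2 * r * t.val) (d := 0)
    (fun _ _ _ => rfl) (by simp) (fun m h₁ h₂ => ?_) a e
  rw [blockRight_of_mem t h₁ h₂, add_zero]

theorem shiftedCircuit_isEulerian (hr : 2 ≤ r) : (shiftedCircuit r s).IsEulerian := by
  have : NeZero r := ⟨by omega⟩
  refine (Walk.isEulerian_copy _ _ _).2 (isEulerian_alternatingWalk _ _ (Nat.pos_of_neZero _)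
    two_mul_eq_card_mul_card.le periodic_shiftedLeft periodic_shiftedRight ?_)
  rintro a ⟨t, e⟩
  set c := 2 * r * (t - 1).val + 1
  have hc : ((c : ℕ) : ZMod (2 * r)) = 1 := by simp [c]
  have hclose : shiftedLeft r s (c + 2 * r) = shiftedLeft r s c := by
    rw [shiftedLeft_of_natCast_eq_one hr hc, shiftedLeft_of_natCast_eq_one hr (by simpa using hc)]
  refine traverses_of_doubleStar ⟨r, two_mul r⟩ (shiftPerm r s t) (d := 1) (fun m h₁ h₂ => ?_)
    hclose (fun m h₁ h₂ => ?_) a e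
  · rw [shiftedLeft, shiftedPair_of_mem t h₁ h₂]
  · rw [shiftedRight, shiftedPair_of_mem t h₁ h₂]

theorem hasAvoidingEulerianPair_zmod (hr : 2 ≤ r) :
    (completeBipartiteGraph (ZMod (2 * r)) (ZMod s × ZMod 2)).HasAvoidingEulerianPair
      (.inl 0) := by
  have : NeZero r := ⟨by omega⟩
  refine ⟨blockCircuit r s, shiftedCircuit r s, blockCircuit_isEulerian,
    shiftedCircuit_isEulerian hr, avoiding_copy_alternatingWalk _ _ _ _
    (fun m h₀ hm => natCast_ne_shiftedLeft hr h₀ hm) fun m _ h => ?_⟩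
  simpa [blockRight, shiftedRight] using congrArg Prod.snd h

end completeBipartiteGraph

theorem hasAvoidingEulerianPair_completeBipartiteGraph_inl [Fintype α] [Fintype β]
    [DecidableEq α] [DecidableEq β] {r s : ℕ} (hα : Fintype.card α = 2 * r)
    (hβ : Fintype.card β = 2 * s) (hr : 2 ≤ r) [NeZero s] (a : α) :
    (completeBipartiteGraph α β).HasAvoidingEulerianPair (.inl a) := by
  have : NeZero r := ⟨by omega⟩
  let e₀ : ZMod (2 * r) ≃ α := Fintype.equivOfCardEq (by rw [ZMod.card, hα])
  let e₁ : ZMod (2 * r) ≃ α := e₀.trans (Equiv.swap (e₀ 0) a)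
  let e₂ : ZMod s × ZMod 2 ≃ β := Fintype.equivOfCardEq (by simp [hβ, mul_comm])
  have he : Iso.completeBipartiteGraphCongr e₁ e₂ (.inl 0) = .inl a := by
    simp [Iso.completeBipartiteGraphCongr, e₁]
  exact he ▸ (completeBipartiteGraph.hasAvoidingEulerianPair_zmod hr).map_iso _

end SimpleGraph

/-- The complete bipartite graph `K_{2r,2s}` with `r, s ≥ 2` is doubly Eulerian. -/
theorem completeBipartite_even_doublyEulerian (r s : ℕ) (hr : 2 ≤ r) (hs : 2 ≤ s) :
    DoublyEulerian (completeBipartiteGraph (Fin (2 * r)) (Fin (2 * s))) := by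
  have : NeZero r := ⟨by omega⟩
  have : NeZero s := ⟨by omega⟩
  rintro (a | b)
  · exact hasAvoidingEulerianPair_completeBipartiteGraph_inl (Fintype.card_fin _)
      (Fintype.card_fin _) hr a
  · exact (hasAvoidingEulerianPair_completeBipartiteGraph_inl (Fintype.card_fin _)
      (Fintype.card_fin _) hs b).map_iso Iso.completeBipartiteGraphComm
end

section
/- The complete bipartite graph K_{2,2s} (s ≥ 1) is not doubly Eulerian: no two Eulerian circuits starting at a vertex of the 2-element part can be avoiding. -/
/-!
Let `a = inl i` and `b` be the two vertices of the small side. Every vertex of an Eulerian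
circuit is left once and entered once per visit, so a circuit of `K_{2,2s}` sits at each of
`a`, `b` at exactly `s` of the times `0 ≤ k < 4s`. Both circuits of an avoiding pair are on
the small side at the same (even) times, and there they must be at different vertices;
hence at every time `0 < k` the second circuit is at `a` exactly when the first is at `b`.
Counting, the second circuit is at `a` one time more (time `0`) than the first is at `b`,
i.e. `s = s + 1`.
-/

open SimpleGraph

open Finset

namespace SimpleGraph

instance completeBipartiteGraph.decidableAdj (A B : Type*) :
    DecidableRel (completeBipartiteGraph A B).Adj :=
  fun _ _ => inferInstanceAs (Decidable (_ ∨ _))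

theorem completeBipartiteGraph_degree_inl {A B : Type*} [Fintype A] [Fintype B] (a : A) :
    (completeBipartiteGraph A B).degree (Sum.inl a) = Fintype.card B := by
  have : (completeBipartiteGraph A B).neighborFinset (Sum.inl a) =
      univ.map Function.Embedding.inr := by
    ext (x | x) <;> simp
  rw [← card_neighborFinset_eq_degree, this, card_map, card_univ]

theorem Coloring.apply_getVert_eq {V : Type*} {G : SimpleGraph V} (c : G.Coloring Bool)
    {u v w : V} (p : G.Walk u v) (q : G.Walk u w) {k : ℕ} (hp : k ≤ p.length)
    (hq : k ≤ q.length) : c (p.getVert k) = c (q.getVert k) := by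
  have hp' := c.even_length_iff_congr (p.take k)
  have hq' := c.even_length_iff_congr (q.take k)
  rw [Walk.take_length, min_eq_left hp] at hp'
  rw [Walk.take_length, min_eq_left hq] at hq'
  rw [Bool.eq_iff_iff]
  tauto

namespace Walk

variable {V : Type*} {G : SimpleGraph V} {u v : V}

theorem support_dropLast_eq_map_getVert (p : G.Walk u v) :
    p.support.dropLast = (List.range p.length).map p.getVert := by
  refine List.ext_getElem (by simp) fun k hk _ => ?_
  rw [List.getElem_dropLast, List.getElem_map, List.getElem_range,
    p.getVert_eq_support_getElem (by simp at hk; omega)]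

variable [DecidableEq V]

theorem count_support_dropLast (p : G.Walk u v) (x : V) :
    p.support.dropLast.count x = #{k ∈ range p.length | p.getVert k = x} := by
  rw [support_dropLast_eq_map_getVert, List.count, List.countP_map,
    ← Nat.count_eq_card_filter_range]
  simp [Nat.count, Function.comp_def, beq_eq_decide]

theorem count_support_dropLast_eq_count_support_tail (p : G.Walk u u) (x : V) :
    p.support.dropLast.count x = p.support.tail.count x := by
  have hlast : p.support.count x = p.support.dropLast.count x + if u = x then 1 else 0 := by
    conv_lhs => rw [← List.dropLast_append_getLast p.support_ne_nil, List.count_append,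
      p.getLast_support, List.count_singleton]
    simp [beq_eq_decide]
  have hhead : p.support.count x = p.support.tail.count x + if u = x then 1 else 0 := by
    conv_lhs => rw [← p.cons_tail_support, List.count_cons]
    simp [beq_eq_decide]
  omega

theorem countP_edges_mem_eq (p : G.Walk u v) (x : V) :
    p.edges.countP (x ∈ ·) = p.support.dropLast.count x + p.support.tail.count x := by
  induction p with
  | nil => simp
  | @cons a b c h p ih =>
    rw [edges_cons, List.countP_cons, ih, support_cons, List.tail_cons,
      List.dropLast_cons_of_ne_nil p.support_ne_nil, List.count_cons]
    have hsupp : p.support.count x = p.support.tail.count x + if b = x then 1 else 0 := by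
      rw [← p.cons_tail_support, List.count_cons, List.tail_cons]
      simp
    simp only [hsupp, Sym2.mem_iff, beq_iff_eq, decide_eq_true_eq]
    have hab : a ≠ b := h.ne
    split_ifs <;> grind

theorem countP_edges_mem_eq_two_mul_card (p : G.Walk u u) (x : V) :
    p.edges.countP (x ∈ ·) = 2 * #{k ∈ range p.length | p.getVert k = x} := by
  rw [countP_edges_mem_eq, ← count_support_dropLast_eq_count_support_tail,
    count_support_dropLast, two_mul]

theorem IsEulerian.length_eq {w x : V} {p : G.Walk u v} {q : G.Walk w x}
    (hp : p.IsEulerian) (hq : q.IsEulerian) : p.length = q.length := by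
  rw [← length_edges, ← length_edges]
  refine ((List.perm_ext_iff_of_nodup hp.isTrail.edges_nodup hq.isTrail.edges_nodup).2
    fun e => ?_).length_eq
  rw [hp.mem_edges_iff, hq.mem_edges_iff]

theorem IsEulerian.countP_edges_mem_eq_degree [Fintype V] [DecidableRel G.Adj]
    {p : G.Walk u v} (h : p.IsEulerian) (x : V) : p.edges.countP (x ∈ ·) = G.degree x := by
  rw [← card_incidenceFinset_eq_degree, incidenceFinset_eq_filter, ← h.edgesFinset_eq]
  simp [Finset.card, Finset.filter, List.countP_eq_length_filter]

theorem IsEulerian.two_mul_card_getVert_eq_degree [Fintype V] [DecidableRel G.Adj]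
    {p : G.Walk u u} (h : p.IsEulerian) (x : V) :
    2 * #{k ∈ range p.length | p.getVert k = x} = G.degree x := by
  rw [← countP_edges_mem_eq_two_mul_card, h.countP_edges_mem_eq_degree]

end Walk

end SimpleGraph

theorem Sum.eq_inl_iff_eq_inl_of_ne {B : Type*} {i j : Fin 2} (hij : i ≠ j) {x y : Fin 2 ⊕ B}
    (hxy : x ≠ y) (h : x.isRight = y.isRight) : x = .inl i ↔ y = .inl j := by
  rcases x with a | a <;> rcases y with b | b <;> simp_all
  omega

theorem Avoiding.card_getVert_eq_inl {B : Type*} [DecidableEq B] {i j : Fin 2} (hij : i ≠ j)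
    {p q : (completeBipartiteGraph (Fin 2) B).Walk (.inl i) (.inl i)}
    (h : Avoiding _ p q) (hlen : q.length = p.length) (hpos : 0 < p.length) :
    #{k ∈ range p.length | q.getVert k = .inl i} =
      #{k ∈ range p.length | p.getVert k = .inl j} + 1 := by
  have hswap : ∀ k, 0 < k → k < p.length → (q.getVert k = .inl i ↔ p.getVert k = .inl j) :=
    fun k hk0 hk => Sum.eq_inl_iff_eq_inl_of_ne hij (h k hk0 hk).1.symm
      ((CompleteBipartiteGraph.bicoloring _ B).apply_getVert_eq q p (by omega) hk.le)
  have hzero : (0 : ℕ) ∉ ({k ∈ range p.length | p.getVert k = .inl j} : Finset ℕ) := by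
    simp [Walk.getVert_zero, hij]
  rw [← card_insert_of_notMem hzero]
  congr 1
  ext k
  rcases k.eq_zero_or_pos with rfl | hk0
  · simp [Walk.getVert_zero, hpos]
  · simp only [mem_filter, mem_range, mem_insert, hk0.ne', false_or]
    exact and_congr_right (hswap k hk0)

/-- The complete bipartite graph `K_{2,2s}` (`s ≥ 1`) is not doubly Eulerian: no
two Eulerian circuits starting at a vertex of the 2-element part are avoiding. -/
theorem completeBipartite_two_not_doublyEulerian (s : ℕ) (hs : 1 ≤ s) (i : Fin 2)
    (p q : (completeBipartiteGraph (Fin 2) (Fin (2 * s))).Walk (Sum.inl i) (Sum.inl i))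
    (hp : p.IsEulerian) (hq : q.IsEulerian) :
    ¬ Avoiding (completeBipartiteGraph (Fin 2) (Fin (2 * s))) p q := by
  intro hav
  have hij : i ≠ i + 1 := by omega
  have hlen : q.length = p.length := hq.length_eq hp
  have hp_visits := hp.two_mul_card_getVert_eq_degree (.inl (i + 1))
  have hq_visits := hq.two_mul_card_getVert_eq_degree (.inl i)
  rw [completeBipartiteGraph_degree_inl, Fintype.card_fin] at hp_visits hq_visits
  rw [hlen] at hq_visits
  have hpos : 0 < p.length := Nat.pos_of_ne_zero fun h0 => by simp [h0] at hq_visits; omega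
  have := hav.card_getVert_eq_inl hij hlen hpos
  omega
end

section
/- For the graph Γ(a,b,c,d): if d ≥ a+b+c+3 then Γ has avoidance index 1, i.e. there exist no two avoiding Eulerian circuits from the vertex on path D adjacent to u. -/
open SimpleGraph

/-- The vertex set of the graph `Γ(a,b,c,d)`: the two degree-4 vertices together
with the internal vertices of the four paths `A`, `B`, `C`, `D`. -/
abbrev GammaV (a b c d : ℕ) : Type := Fin 2 ⊕ (Fin a ⊕ (Fin b ⊕ (Fin c ⊕ Fin d)))

/-- The relation describing a path from `u` to `v` whose internal vertices are
`f 0, f 1, …, f (k-1)`. -/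
def pathRel {V : Type*} (u v : V) {k : ℕ} (f : Fin k → V) (x y : V) : Prop :=
  (∃ i : Fin k, (i : ℕ) = 0 ∧ x = u ∧ y = f i) ∨
  (∃ i j : Fin k, (j : ℕ) = (i : ℕ) + 1 ∧ x = f i ∧ y = f j) ∨
  (∃ i : Fin k, (i : ℕ) = k - 1 ∧ x = f i ∧ y = v)

/-- The graph `Γ(a,b,c,d)`: two vertices `u = Sum.inl 0` and `v = Sum.inl 1` of
degree 4 joined by four internally disjoint paths `A`, `B`, `C`, `D` having
respectively `a`, `b`, `c`, `d` internal vertices of degree 2 (an empty path is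
replaced by the edge `u v`). -/
def Gamma (a b c d : ℕ) : SimpleGraph (GammaV a b c d) :=
  SimpleGraph.fromRel (fun x y =>
    (x = Sum.inl 0 ∧ y = Sum.inl 1 ∧ (a = 0 ∨ b = 0 ∨ c = 0 ∨ d = 0)) ∨
    pathRel (Sum.inl 0) (Sum.inl 1) (fun i : Fin a => Sum.inr (Sum.inl i)) x y ∨
    pathRel (Sum.inl 0) (Sum.inl 1) (fun i : Fin b => Sum.inr (Sum.inr (Sum.inl i))) x y ∨
    pathRel (Sum.inl 0) (Sum.inl 1) (fun i : Fin c => Sum.inr (Sum.inr (Sum.inr (Sum.inl i)))) x y ∨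
    pathRel (Sum.inl 0) (Sum.inl 1) (fun i : Fin d => Sum.inr (Sum.inr (Sum.inr (Sum.inr i)))) x y)


/-- the `j`-th vertex along a path from `u` to `v` with internal vertices `f`. -/
def pnode {V : Type*} (v : V) {k : ℕ} (f : Fin k → V) (j : ℕ) : V :=
  if h : j < k then f ⟨j, h⟩ else v

/-- the `j`-th edge along a path from `u` to `v` with internal vertices `f`. -/
def pedge {V : Type*} (u v : V) {k : ℕ} (f : Fin k → V) (j : ℕ) : Sym2 V :=
  s(if j = 0 then u else pnode v f (j - 1), pnode v f j)

lemma pathRel_edge {V : Type*} (u v : V) {k : ℕ} (f : Fin k → V) {x y : V}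
    (h : pathRel u v f x y) : ∃ j ≤ k, s(x, y) = pedge u v f j := by
  rcases h with ⟨i, hi, rfl, rfl⟩ | ⟨i, j, hj, rfl, rfl⟩ | ⟨i, hi, rfl, hyv⟩
  · refine ⟨0, Nat.zero_le _, ?_⟩
    have hk : 0 < k := lt_of_le_of_lt (Nat.zero_le _) i.isLt
    have : f i = f ⟨0, hk⟩ := by congr 1; exact Fin.ext hi
    simp [pedge, pnode, hk, this]
  · refine ⟨(j : ℕ), Nat.le_of_lt j.isLt, ?_⟩
    have h1 : ((j : ℕ)) ≠ 0 := by omega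
    have h2 : (j : ℕ) - 1 < k := lt_of_le_of_lt (by omega) i.isLt
    have hfj : f j = pnode v f (j : ℕ) := by simp [pnode, j.isLt]
    have hfi : f i = pnode v f ((j : ℕ) - 1) := by
      simp only [pnode, dif_pos h2]
      congr 1; apply Fin.ext; simp only []; omega
    rw [pedge, if_neg h1, ← hfi, ← hfj]
  · rw [hyv]
    refine ⟨k, le_rfl, ?_⟩
    have hk : 0 < k := lt_of_le_of_lt (Nat.zero_le _) i.isLt
    have h1 : k ≠ 0 := by omega
    have h2 : k - 1 < k := by omega
    have hfi : f i = pnode v f (k - 1) := by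
      simp only [pnode, dif_pos h2]
      congr 1; apply Fin.ext; simp only []; omega
    rw [pedge, if_neg h1, ← hfi]
    simp [pnode]

lemma uv_edge {V : Type*} (u v : V) (f : Fin 0 → V) : s(u, v) = pedge u v f 0 := by
  simp [pedge, pnode]

/-- The function giving the internal vertices of path `D`. -/
def Dfun (a b c d : ℕ) : Fin d → GammaV a b c d :=
  fun i => Sum.inr (Sum.inr (Sum.inr (Sum.inr i)))

/-- The `k`-th vertex along path `D` (with `dnode 0` adjacent to `u`, and
`dnode k = v` for `k ≥ d`). -/
def dnode (a b c d : ℕ) (k : ℕ) : GammaV a b c d :=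
  pnode (Sum.inl 1) (Dfun a b c d) k

variable {a b c d : ℕ}

lemma dnode_lt {k : ℕ} (h : k < d) :
    dnode a b c d k = Sum.inr (Sum.inr (Sum.inr (Sum.inr ⟨k, h⟩))) := dif_pos h

lemma dnode_ge {k : ℕ} (h : d ≤ k) : dnode a b c d k = Sum.inl 1 := dif_neg (by omega)

lemma dnode_inj {k l : ℕ} (hk : k ≤ d) (hl : l ≤ d)
    (h : dnode a b c d k = dnode a b c d l) : k = l := by
  unfold dnode pnode at h
  split_ifs at h with h1 h2 h2 <;> simp_all [Dfun] <;> omega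

lemma dnode_ne_u (k : ℕ) : dnode a b c d k ≠ Sum.inl 0 := by
  unfold dnode pnode
  split_ifs <;> simp [Dfun]

lemma adj_u_dnode (h : 0 < d) : (Gamma a b c d).Adj (Sum.inl 0) (dnode a b c d 0) := by
  rw [dnode_lt h, Gamma, SimpleGraph.fromRel_adj]
  exact ⟨by simp, Or.inl (Or.inr (Or.inr (Or.inr (Or.inr
    (Or.inl ⟨⟨0, h⟩, rfl, rfl, rfl⟩)))))⟩

lemma adj_dnode_succ {k : ℕ} (h : k + 1 ≤ d) :
    (Gamma a b c d).Adj (dnode a b c d k) (dnode a b c d (k + 1)) := by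
  have hk : k < d := by omega
  rw [dnode_lt hk, Gamma, SimpleGraph.fromRel_adj]
  by_cases h' : k + 1 < d
  · rw [dnode_lt h']
    refine ⟨by simp [Fin.ext_iff], Or.inl (Or.inr (Or.inr (Or.inr (Or.inr
      (Or.inr (Or.inl ⟨⟨k, hk⟩, ⟨k + 1, h'⟩, rfl, rfl, rfl⟩))))))⟩
  · rw [dnode_ge (by omega)]
    refine ⟨by simp, Or.inl (Or.inr (Or.inr (Or.inr (Or.inr
      (Or.inr (Or.inr ⟨⟨k, hk⟩, show k = d - 1 by omega, rfl, rfl⟩))))))⟩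

lemma adj_dnode_elim {k : ℕ} {x : GammaV a b c d} (hk : k < d)
    (h : (Gamma a b c d).Adj (dnode a b c d k) x) :
    x = (if k = 0 then Sum.inl 0 else dnode a b c d (k - 1)) ∨ x = dnode a b c d (k + 1) := by
  rw [dnode_lt hk, Gamma, SimpleGraph.fromRel_adj] at h
  obtain ⟨hne, h | h⟩ := h
  · rcases h with ⟨h1, -, -⟩ | hA | hB | hC | hD
    · simp at h1
    · rcases hA with ⟨i, -, h1, -⟩ | ⟨i, j, -, h1, -⟩ | ⟨i, -, h1, -⟩ <;> simp at h1
    · rcases hB with ⟨i, -, h1, -⟩ | ⟨i, j, -, h1, -⟩ | ⟨i, -, h1, -⟩ <;> simp at h1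
    · rcases hC with ⟨i, -, h1, -⟩ | ⟨i, j, -, h1, -⟩ | ⟨i, -, h1, -⟩ <;> simp at h1
    · rcases hD with ⟨i, -, h1, -⟩ | ⟨i, j, hj, h1, h2⟩ | ⟨i, hi, h1, h2⟩
      · simp at h1
      · right
        simp only [Sum.inr.injEq] at h1
        have hik : (i : ℕ) = k := by rw [← h1]
        have hkd : k + 1 < d := by have := j.isLt; omega
        rw [h2, dnode_lt hkd]
        simp only [Sum.inr.injEq]
        exact Fin.ext (show (j : ℕ) = k + 1 by omega)
      · right
        simp only [Sum.inr.injEq] at h1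
        have hik : (i : ℕ) = k := by rw [← h1]
        rw [h2, dnode_ge (by omega)]
  · rcases h with ⟨-, h1, -⟩ | hA | hB | hC | hD
    · simp at h1
    · rcases hA with ⟨i, -, -, h1⟩ | ⟨i, j, -, -, h1⟩ | ⟨i, -, -, h1⟩ <;> simp at h1
    · rcases hB with ⟨i, -, -, h1⟩ | ⟨i, j, -, -, h1⟩ | ⟨i, -, -, h1⟩ <;> simp at h1
    · rcases hC with ⟨i, -, -, h1⟩ | ⟨i, j, -, -, h1⟩ | ⟨i, -, -, h1⟩ <;> simp at h1
    · rcases hD with ⟨i, hi, hx, h1⟩ | ⟨i, j, hj, hx, h1⟩ | ⟨i, -, -, h1⟩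
      · left
        simp only [Sum.inr.injEq] at h1
        have hik : (i : ℕ) = k := by rw [← h1]
        rw [if_pos (by omega), hx]
      · left
        simp only [Sum.inr.injEq] at h1
        have hjk : (j : ℕ) = k := by rw [← h1]
        have hik : (i : ℕ) = k - 1 := by omega
        rw [if_neg (by omega), hx, dnode_lt (show k - 1 < d from by have := i.isLt; omega)]
        simp only [Sum.inr.injEq]
        exact Fin.ext (show (i : ℕ) = k - 1 by omega)
      · simp at h1

lemma walk_edge_at {V : Type*} {G : SimpleGraph V} {x y : V} (p : G.Walk x y) (i : ℕ)
    (h : i < p.length) :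
    p.edges[i]'(by rw [SimpleGraph.Walk.length_edges]; exact h)
      = s(p.getVert i, p.getVert (i + 1)) := by
  induction p generalizing i with
  | nil => simp at h
  | cons hadj q ih =>
    match i with
    | 0 =>
      simp [SimpleGraph.Walk.edges_cons, SimpleGraph.Walk.getVert_cons_succ,
        SimpleGraph.Walk.getVert_zero]
    | (n + 1) =>
      simp only [SimpleGraph.Walk.edges_cons, SimpleGraph.Walk.getVert_cons_succ,
        List.getElem_cons_succ]
      exact ih n (by simpa using h)

lemma trail_edge_ne {V : Type*} {G : SimpleGraph V} {x y : V} {p : G.Walk x y}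
    (hp : p.IsTrail) {i j : ℕ} (hij : i ≠ j) (hi : i < p.length) (hj : j < p.length)
    (he : s(p.getVert i, p.getVert (i + 1)) = s(p.getVert j, p.getVert (j + 1))) : False := by
  rw [← walk_edge_at p i hi, ← walk_edge_at p j hj] at he
  have hnd := hp.edges_nodup
  exact hij (hnd.getElem_inj_iff.mp he)

lemma march {a b c d : ℕ} {w : GammaV a b c d} (hw : w = dnode a b c d 0) (h0 : 0 < d)
    (p : (Gamma a b c d).Walk w w) (hT : p.IsTrail)
    (h1 : p.getVert 1 = dnode a b c d 1) :
    ∀ k, k ≤ d → p.getVert k = dnode a b c d k := by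
  intro k
  induction k using Nat.strong_induction_on with
  | _ k ih =>
    intro hkd
    match k with
    | 0 => rw [SimpleGraph.Walk.getVert_zero, hw]
    | 1 => exact h1
    | (m + 2) =>
      have hm1 : p.getVert (m + 1) = dnode a b c d (m + 1) := ih (m + 1) (by omega) (by omega)
      have hm : p.getVert m = dnode a b c d m := ih m (by omega) (by omega)
      have hlen : m + 1 < p.length := by
        by_contra hcon
        push_neg at hcon
        rw [p.getVert_of_length_le hcon, hw] at hm1
        have := dnode_inj (Nat.zero_le d) (by omega) hm1
        omega
      have hadj := p.adj_getVert_succ hlen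
      rw [hm1] at hadj
      rcases adj_dnode_elim (show m + 1 < d by omega) hadj with hh | hh
      · exfalso
        rw [if_neg (by omega), Nat.add_sub_cancel] at hh
        refine trail_edge_ne hT (show m ≠ m + 1 by omega) (by omega) hlen ?_
        rw [hm, hm1, hh]
        exact Sym2.eq_swap
      · exact hh

lemma gamma_adj_mem {a b c d : ℕ} {x y : GammaV a b c d} (he : (Gamma a b c d).Adj x y) :
    (∃ j ≤ a, s(x, y) = pedge (Sum.inl 0) (Sum.inl 1)
      (fun i : Fin a => (Sum.inr (Sum.inl i) : GammaV a b c d)) j) ∨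
    (∃ j ≤ b, s(x, y) = pedge (Sum.inl 0) (Sum.inl 1)
      (fun i : Fin b => (Sum.inr (Sum.inr (Sum.inl i)) : GammaV a b c d)) j) ∨
    (∃ j ≤ c, s(x, y) = pedge (Sum.inl 0) (Sum.inl 1)
      (fun i : Fin c => (Sum.inr (Sum.inr (Sum.inr (Sum.inl i))) : GammaV a b c d)) j) ∨
    (∃ j ≤ d, s(x, y) = pedge (Sum.inl 0) (Sum.inl 1)
      (fun i : Fin d => (Sum.inr (Sum.inr (Sum.inr (Sum.inr i))) : GammaV a b c d)) j) := by
  rw [Gamma, SimpleGraph.fromRel_adj] at he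
  obtain ⟨-, h | h⟩ := he
  · rcases h with ⟨rfl, rfl, h0⟩ | hA | hB | hC | hD
    · rcases h0 with h0 | h0 | h0 | h0
      · subst h0; exact Or.inl ⟨0, le_rfl, uv_edge _ _ _⟩
      · subst h0; exact Or.inr (Or.inl ⟨0, le_rfl, uv_edge _ _ _⟩)
      · subst h0; exact Or.inr (Or.inr (Or.inl ⟨0, le_rfl, uv_edge _ _ _⟩))
      · subst h0; exact Or.inr (Or.inr (Or.inr ⟨0, le_rfl, uv_edge _ _ _⟩))
    · exact Or.inl (pathRel_edge _ _ _ hA)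
    · exact Or.inr (Or.inl (pathRel_edge _ _ _ hB))
    · exact Or.inr (Or.inr (Or.inl (pathRel_edge _ _ _ hC)))
    · exact Or.inr (Or.inr (Or.inr (pathRel_edge _ _ _ hD)))
  · rw [Sym2.eq_swap]
    rcases h with ⟨rfl, rfl, h0⟩ | hA | hB | hC | hD
    · rcases h0 with h0 | h0 | h0 | h0
      · subst h0; exact Or.inl ⟨0, le_rfl, uv_edge _ _ _⟩
      · subst h0; exact Or.inr (Or.inl ⟨0, le_rfl, uv_edge _ _ _⟩)
      · subst h0; exact Or.inr (Or.inr (Or.inl ⟨0, le_rfl, uv_edge _ _ _⟩))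
      · subst h0; exact Or.inr (Or.inr (Or.inr ⟨0, le_rfl, uv_edge _ _ _⟩))
    · exact Or.inl (pathRel_edge _ _ _ hA)
    · exact Or.inr (Or.inl (pathRel_edge _ _ _ hB))
    · exact Or.inr (Or.inr (Or.inl (pathRel_edge _ _ _ hC)))
    · exact Or.inr (Or.inr (Or.inr (pathRel_edge _ _ _ hD)))

lemma gamma_trail_length_le {a b c d : ℕ} {w x : GammaV a b c d}
    (p : (Gamma a b c d).Walk w x) (hT : p.IsTrail) :
    p.length ≤ a + b + c + d + 4 := by
  classical
  have hsub : p.edges.toFinset ⊆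
      ((Finset.range (a + 1)).image (pedge (Sum.inl 0) (Sum.inl 1)
        (fun i : Fin a => (Sum.inr (Sum.inl i) : GammaV a b c d)))) ∪
      ((Finset.range (b + 1)).image (pedge (Sum.inl 0) (Sum.inl 1)
        (fun i : Fin b => (Sum.inr (Sum.inr (Sum.inl i)) : GammaV a b c d)))) ∪
      ((Finset.range (c + 1)).image (pedge (Sum.inl 0) (Sum.inl 1)
        (fun i : Fin c => (Sum.inr (Sum.inr (Sum.inr (Sum.inl i))) : GammaV a b c d)))) ∪
      ((Finset.range (d + 1)).image (pedge (Sum.inl 0) (Sum.inl 1)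
        (fun i : Fin d => (Sum.inr (Sum.inr (Sum.inr (Sum.inr i))) : GammaV a b c d)))) := by
    intro e he
    rw [List.mem_toFinset] at he
    have heE := p.edges_subset_edgeSet he
    simp only [Finset.mem_union, Finset.mem_image, Finset.mem_range]
    revert heE
    refine Sym2.ind (fun x y heE => ?_) e
    rw [SimpleGraph.mem_edgeSet] at heE
    rcases gamma_adj_mem heE with ⟨j, hj, hh⟩ | ⟨j, hj, hh⟩ | ⟨j, hj, hh⟩ | ⟨j, hj, hh⟩
    · exact Or.inl (Or.inl (Or.inl ⟨j, by omega, hh.symm⟩))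
    · exact Or.inl (Or.inl (Or.inr ⟨j, by omega, hh.symm⟩))
    · exact Or.inl (Or.inr ⟨j, by omega, hh.symm⟩)
    · exact Or.inr ⟨j, by omega, hh.symm⟩
  have h1 : p.length = p.edges.toFinset.card := by
    rw [List.toFinset_card_of_nodup hT.edges_nodup, SimpleGraph.Walk.length_edges]
  have h2 := Finset.card_le_card hsub
  have h3 := Finset.card_union_le
    (((Finset.range (a + 1)).image (pedge (Sum.inl 0) (Sum.inl 1)
        (fun i : Fin a => (Sum.inr (Sum.inl i) : GammaV a b c d)))) ∪
      ((Finset.range (b + 1)).image (pedge (Sum.inl 0) (Sum.inl 1)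
        (fun i : Fin b => (Sum.inr (Sum.inr (Sum.inl i)) : GammaV a b c d)))) ∪
      ((Finset.range (c + 1)).image (pedge (Sum.inl 0) (Sum.inl 1)
        (fun i : Fin c => (Sum.inr (Sum.inr (Sum.inr (Sum.inl i))) : GammaV a b c d)))))
    ((Finset.range (d + 1)).image (pedge (Sum.inl 0) (Sum.inl 1)
        (fun i : Fin d => (Sum.inr (Sum.inr (Sum.inr (Sum.inr i))) : GammaV a b c d))))
  have h4 := Finset.card_union_le
    (((Finset.range (a + 1)).image (pedge (Sum.inl 0) (Sum.inl 1)
        (fun i : Fin a => (Sum.inr (Sum.inl i) : GammaV a b c d)))) ∪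
      ((Finset.range (b + 1)).image (pedge (Sum.inl 0) (Sum.inl 1)
        (fun i : Fin b => (Sum.inr (Sum.inr (Sum.inl i)) : GammaV a b c d)))))
    ((Finset.range (c + 1)).image (pedge (Sum.inl 0) (Sum.inl 1)
        (fun i : Fin c => (Sum.inr (Sum.inr (Sum.inr (Sum.inl i))) : GammaV a b c d))))
  have h5 := Finset.card_union_le
    ((Finset.range (a + 1)).image (pedge (Sum.inl 0) (Sum.inl 1)
        (fun i : Fin a => (Sum.inr (Sum.inl i) : GammaV a b c d))))
    ((Finset.range (b + 1)).image (pedge (Sum.inl 0) (Sum.inl 1)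
        (fun i : Fin b => (Sum.inr (Sum.inr (Sum.inl i)) : GammaV a b c d))))
  have hA := Finset.card_image_le (s := Finset.range (a + 1)) (f := pedge (Sum.inl 0) (Sum.inl 1)
        (fun i : Fin a => (Sum.inr (Sum.inl i) : GammaV a b c d)))
  have hB := Finset.card_image_le (s := Finset.range (b + 1)) (f := pedge (Sum.inl 0) (Sum.inl 1)
        (fun i : Fin b => (Sum.inr (Sum.inr (Sum.inl i)) : GammaV a b c d)))
  have hC := Finset.card_image_le (s := Finset.range (c + 1)) (f := pedge (Sum.inl 0) (Sum.inl 1)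
        (fun i : Fin c => (Sum.inr (Sum.inr (Sum.inr (Sum.inl i))) : GammaV a b c d)))
  have hD := Finset.card_image_le (s := Finset.range (d + 1)) (f := pedge (Sum.inl 0) (Sum.inl 1)
        (fun i : Fin d => (Sum.inr (Sum.inr (Sum.inr (Sum.inr i))) : GammaV a b c d)))
  simp only [Finset.card_range] at hA hB hC hD
  omega

lemma key {a b c d : ℕ} (hd : a + b + c + 3 ≤ d) {w : GammaV a b c d}
    (hw : w = dnode a b c d 0)
    (p q : (Gamma a b c d).Walk w w) (hpT : p.IsTrail) (hqT : q.IsTrail)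
    (hlen : q.length = p.length) (hLd : d < p.length)
    (hLub : p.length ≤ a + b + c + d + 4)
    (hp1 : p.getVert 1 = dnode a b c d 1)
    (hq1 : q.reverse.getVert 1 = dnode a b c d 1)
    (hav : ∀ i, 0 < i → i < p.length →
      p.getVert i ≠ q.getVert i ∧
      ¬ (Gamma a b c d).Adj (p.getVert i) (q.getVert i)) : False := by
  have h0d : 0 < d := by omega
  have hmp := march hw h0d p hpT hp1
  have hmqr := march hw h0d q.reverse (SimpleGraph.Walk.IsTrail.reverse q hqT) hq1
  have hmq : ∀ k, k ≤ d → q.getVert (p.length - k) = dnode a b c d k := by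
    intro k hk
    have h := hmqr k hk
    rw [SimpleGraph.Walk.getVert_reverse, hlen] at h
    exact h
  by_cases hcase : p.length ≤ 2 * d
  · have hi0 : 1 ≤ (p.length + 1) / 2 ∧ (p.length + 1) / 2 ≤ d ∧
        1 ≤ p.length - (p.length + 1) / 2 ∧ p.length - (p.length + 1) / 2 ≤ d ∧
        ((p.length + 1) / 2 = p.length - (p.length + 1) / 2 ∨
          (p.length + 1) / 2 = (p.length - (p.length + 1) / 2) + 1) := by
      omega
    have hpv : p.getVert ((p.length + 1) / 2) = dnode a b c d ((p.length + 1) / 2) :=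
      hmp _ hi0.2.1
    have hqv := hmq (p.length - (p.length + 1) / 2) hi0.2.2.2.1
    have h' : p.length - (p.length - (p.length + 1) / 2) = (p.length + 1) / 2 := by omega
    rw [h'] at hqv
    rcases hi0.2.2.2.2 with he | he
    · exact (hav ((p.length + 1) / 2) (by omega) (by omega)).1
        (by rw [hpv, hqv]; exact congrArg _ he)
    · refine (hav ((p.length + 1) / 2) (by omega) (by omega)).2 ?_
      have h5 : dnode a b c d ((p.length + 1) / 2)
          = dnode a b c d ((p.length - (p.length + 1) / 2) + 1) := congrArg _ he
      rw [hpv, hqv, h5]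
      exact (adj_dnode_succ (k := p.length - (p.length + 1) / 2) (by omega)).symm
  · have hL : p.length = 2 * d + 1 := by omega
    have hqv := hmq d le_rfl
    have h' : p.length - d = d + 1 := by omega
    rw [h'] at hqv
    have hadj := p.adj_getVert_succ (show d < p.length from hLd)
    rw [hmp d le_rfl] at hadj
    refine (hav (d + 1) (by omega) (by omega)).2 ?_
    rw [hqv]
    exact hadj.symm

lemma main_aux {a b c d : ℕ} (hd : a + b + c + 3 ≤ d) {w : GammaV a b c d}
    (hw : w = dnode a b c d 0) (p q : (Gamma a b c d).Walk w w)
    (hp : p.IsEulerian) (hq : q.IsEulerian)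
    (hpq : ∀ i : ℕ, 0 < i → i < p.length →
      p.getVert i ≠ q.getVert i ∧
      ¬ (Gamma a b c d).Adj (p.getVert i) (q.getVert i)) : False := by
  classical
  have h0d : 0 < d := by omega
  have hpT := hp.isTrail
  have hqT := hq.isTrail
  have hfin : p.edges.toFinset = q.edges.toFinset := by
    ext e
    simp only [List.mem_toFinset, hp.mem_edges_iff, hq.mem_edges_iff]
  have hlen : q.length = p.length := by
    rw [← SimpleGraph.Walk.length_edges, ← SimpleGraph.Walk.length_edges,
      ← List.toFinset_card_of_nodup hpT.edges_nodup,
      ← List.toFinset_card_of_nodup hqT.edges_nodup, hfin]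
  have hLub : p.length ≤ a + b + c + d + 4 := gamma_trail_length_le p hpT
  have hadjuw : (Gamma a b c d).Adj (Sum.inl 0) w := by
    rw [hw]; exact adj_u_dnode h0d
  have hLpos : 0 < p.length := by
    rcases Nat.eq_zero_or_pos p.length with h | h
    · exfalso
      have hmem : s(Sum.inl 0, w) ∈ p.edges :=
        hp.mem_edges_iff.mpr ((SimpleGraph.mem_edgeSet _).mpr hadjuw)
      have he : p.edges = [] := by
        have := SimpleGraph.Walk.length_edges p
        exact List.length_eq_zero_iff.mp (by omega)
      simp [he] at hmem
    · exact h
  have hqLpos : 0 < q.length := by omega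
  have step1 : ∀ r : (Gamma a b c d).Walk w w, 0 < r.length →
      r.getVert 1 = Sum.inl 0 ∨ r.getVert 1 = dnode a b c d 1 := by
    intro r hl
    have hadj' : (Gamma a b c d).Adj (dnode a b c d 0) (r.getVert 1) := by
      rw [← hw]
      simpa [SimpleGraph.Walk.getVert_zero] using r.adj_getVert_succ hl
    have h := adj_dnode_elim h0d hadj'
    rwa [if_pos rfl] at h
  have step2 : ∀ r : (Gamma a b c d).Walk w w, r.IsTrail → 0 < r.length →
      r.getVert 1 = Sum.inl 0 → r.reverse.getVert 1 = dnode a b c d 1 := by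
    intro r hT hl h1
    have hl' : 0 < r.reverse.length := by rw [SimpleGraph.Walk.length_reverse]; exact hl
    rcases step1 r.reverse hl' with h2 | h2
    · exfalso
      rw [SimpleGraph.Walk.getVert_reverse] at h2
      have hL2 : 2 ≤ r.length := by
        by_contra hcon
        have hr1 : r.length = 1 := by omega
        have hh := r.getVert_length
        rw [hr1, h1, hw] at hh
        exact dnode_ne_u 0 hh.symm
      refine trail_edge_ne hT (show (0 : ℕ) ≠ r.length - 1 by omega) (by omega) (by omega) ?_
      rw [r.getVert_zero, h1]
      have h3 : r.length - 1 + 1 = r.length := by omega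
      rw [h3, r.getVert_length, h2]
      exact Sym2.eq_swap
    · exact h2
  have hLd : d < p.length := by
    rcases step1 p hLpos with h1 | h1
    · have h2 := step2 p hpT hLpos h1
      have h3 := march hw h0d p.reverse (SimpleGraph.Walk.IsTrail.reverse p hpT) h2 d le_rfl
      by_contra hcon
      push_neg at hcon
      have h4 : p.reverse.length ≤ d := by rw [SimpleGraph.Walk.length_reverse]; exact hcon
      rw [SimpleGraph.Walk.getVert_of_length_le _ h4, hw] at h3
      have := dnode_inj (Nat.zero_le d) le_rfl h3
      omega
    · have h3 := march hw h0d p hpT h1 d le_rfl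
      by_contra hcon
      push_neg at hcon
      rw [SimpleGraph.Walk.getVert_of_length_le _ hcon, hw] at h3
      have := dnode_inj (Nat.zero_le d) le_rfl h3
      omega
  rcases step1 p hLpos with hp1 | hp1 <;> rcases step1 q hqLpos with hq1 | hq1
  · have h := (hpq 1 one_pos (by omega)).1
    rw [hp1, hq1] at h
    exact h rfl
  · exact key hd hw q p hqT hpT hlen.symm (by omega) (by omega) hq1
      (step2 p hpT hLpos hp1)
      (fun i h1 h2 => ⟨fun he => (hpq i h1 (by omega)).1 he.symm,
        fun hA => (hpq i h1 (by omega)).2 hA.symm⟩)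
  · exact key hd hw p q hpT hqT hlen hLd hLub hp1 (step2 q hqT hqLpos hq1) hpq
  · have h := (hpq 1 one_pos (by omega)).1
    rw [hp1, hq1] at h
    exact h rfl


/-- If `d ≥ a + b + c + 3` then `Γ(a,b,c,d)` has avoidance index 1: there exist
no two avoiding Eulerian circuits starting from the vertex of path `D` adjacent
to `u`. -/
theorem Gamma_not_doublyEulerian_of_large_d
    (a b c d : ℕ) (hab : a ≤ b) (hbc : b ≤ c) (hcd : c ≤ d)
    (hd : a + b + c + 3 ≤ d) :
    ¬ ∃ p q : (Gamma a b c d).Walk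
        (Sum.inr (Sum.inr (Sum.inr (Sum.inr (⟨0, by omega⟩ : Fin d)))))
        (Sum.inr (Sum.inr (Sum.inr (Sum.inr (⟨0, by omega⟩ : Fin d))))),
      p.IsEulerian ∧ q.IsEulerian ∧ Avoiding (Gamma a b c d) p q := by
  rintro ⟨p, q, hp, hq, hpq⟩
  exact main_aux hd (dnode_lt (show 0 < d by omega)).symm p q hp hq
    (fun i h1 h2 => hpq i h1 h2)
end
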